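/- arXiv:0902.3624 — 2 statements merged into one kernel-verified Lean document; each statement's English description precedes it below -/
import Mathlib

section
/- Let u(x,y) satisfy the Liouville equation u_{xy} = e^{2u} and let w = u_x² − u_{xx}. Then for any smooth function p(x,[w]), the section φ = (u_x + (1/2)D_x)(p(x,[w])) = p·u_x + (1/2)D_x(p) satisfies the determining equation D_xD_y(φ) = 2e^{2u}·φ on solutions, i.e. φ is a symmetry of the Liouville equation; moreover [□(p), □(q)] with □ = u_x + (1/2)D_x corresponds to the bracket p_x q − p q_x (plus the standard evolutionary terms) on the domain. -/
open Real
noncomputable section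
variable {E : Type*} [NormedAddCommGroup E] [NormedSpace ℝ E]

def pd (v : E) (f : E → ℝ) : E → ℝ := fun a => fderiv ℝ f a v

lemma pd_contDiff {f : E → ℝ} (hf : ContDiff ℝ (⊤ : ℕ∞) f) (v : E) : ContDiff ℝ (⊤ : ℕ∞) (pd v f) :=
  (hf.fderiv_right (by simp)).clm_apply contDiff_const

lemma pd_iter_contDiff {f : E → ℝ} (hf : ContDiff ℝ (⊤ : ℕ∞) f) (v : E) (n : ℕ) :
    ContDiff ℝ (⊤ : ℕ∞) ((pd v)^[n] f) := by
  induction n with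
  | zero => exact hf
  | succ n ih => rw [Function.iterate_succ_apply']; exact pd_contDiff ih v

lemma pd_swap {f : E → ℝ} (hf : ContDiff ℝ (⊤ : ℕ∞) f) (v w : E) (b : E) :
    pd v (pd w f) b = pd w (pd v f) b := by
  have hdf : ContDiff ℝ (⊤ : ℕ∞) (fderiv ℝ f) := hf.fderiv_right (by simp)
  have key : ∀ z w₀ : E, fderiv ℝ (pd w₀ f) b z = fderiv ℝ (fderiv ℝ f) b z w₀ := by
    intro z w₀
    have h : HasFDerivAt (fun a => (ContinuousLinearMap.apply ℝ ℝ w₀) (fderiv ℝ f a))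
        ((ContinuousLinearMap.apply ℝ ℝ w₀).comp (fderiv ℝ (fderiv ℝ f) b)) b :=
      (ContinuousLinearMap.apply ℝ ℝ w₀).hasFDerivAt.comp b
        ((hdf.differentiable (by simp)) b).hasFDerivAt
    have : fderiv ℝ (pd w₀ f) b = (ContinuousLinearMap.apply ℝ ℝ w₀).comp
        (fderiv ℝ (fderiv ℝ f) b) := h.fderiv
    rw [this]; rfl
  have hsym := second_derivative_symmetric
    (f' := fderiv ℝ f) (f'' := fderiv ℝ (fderiv ℝ f) b)
    (fun y => ((hf.differentiable (by simp)) y).hasFDerivAt)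
    (((hdf.differentiable (by simp)) b).hasFDerivAt) v w
  show fderiv ℝ (pd w f) b v = fderiv ℝ (pd v f) b w
  rw [key v w, key w v, hsym]

lemma pd_mul {f g : E → ℝ} {z : E} (hf : DifferentiableAt ℝ f z)
    (hg : DifferentiableAt ℝ g z) (v : E) :
    pd v (fun a => f a * g a) z = f z * pd v g z + g z * pd v f z := by
  unfold pd; rw [fderiv_fun_mul hf hg]; simp

lemma pd_add {f g : E → ℝ} {z : E} (hf : DifferentiableAt ℝ f z)
    (hg : DifferentiableAt ℝ g z) (v : E) :
    pd v (fun a => f a + g a) z = pd v f z + pd v g z := by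
  unfold pd; rw [fderiv_fun_add hf hg]; simp

lemma pd_sub {f g : E → ℝ} {z : E} (hf : DifferentiableAt ℝ f z)
    (hg : DifferentiableAt ℝ g z) (v : E) :
    pd v (fun a => f a - g a) z = pd v f z - pd v g z := by
  unfold pd; rw [fderiv_fun_sub hf hg]; simp

lemma pd_const_mul {f : E → ℝ} {z : E} (hf : DifferentiableAt ℝ f z) (c : ℝ) (v : E) :
    pd v (fun a => c * f a) z = c * pd v f z := by
  unfold pd; rw [fderiv_const_mul hf c]; simp

lemma pd_exp2 {f : E → ℝ} {z : E} (hf : DifferentiableAt ℝ f z) (v : E) :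
    pd v (fun a => Real.exp (2 * f a)) z = 2 * pd v f z * Real.exp (2 * f z) := by
  have h1 : HasFDerivAt (fun a => 2 * f a) ((2:ℝ) • fderiv ℝ f z) z :=
    hf.hasFDerivAt.const_mul 2
  have h2 := (Real.hasDerivAt_exp (2 * f z)).comp_hasFDerivAt z h1
  unfold pd
  change (fderiv ℝ (rexp ∘ fun a => 2 * f a) z) v = _
  rw [h2.fderiv]; simp; ring

lemma pd_comp_fst {g : ℝ → ℝ} {x y : ℝ} (hg : DifferentiableAt ℝ g x) (v : ℝ × ℝ) :
    pd v (fun z : ℝ × ℝ => g z.1) (x, y) = v.1 * deriv g x := by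
  have h := (hg.hasDerivAt.hasFDerivAt).comp (x, y) (hasFDerivAt_fst (𝕜 := ℝ) (p := (x, y)))
  unfold pd
  change (fderiv ℝ (g ∘ Prod.fst) (x, y)) v = _
  rw [h.fderiv]; simp [mul_comm]

abbrev E3 : Type := ℝ × (ℝ × ℝ)

lemma pd_comp_snd {f : ℝ × ℝ → ℝ} {w : E3} (hf : DifferentiableAt ℝ f w.2) (v : E3) :
    pd v (fun w : E3 => f w.2) w = pd v.2 f w.2 := by
  have h := hf.hasFDerivAt.comp w hasFDerivAt_snd
  unfold pd
  change (fderiv ℝ (f ∘ Prod.snd) w) v = _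
  rw [h.fderiv]; rfl

lemma pd_zero {f : E → ℝ} (z : E) : pd (0 : E) f z = 0 := (fderiv ℝ f z).map_zero

lemma pd_pair_zero {f : ℝ × ℝ → ℝ} (z : ℝ × ℝ) : pd (((0:ℝ),(0:ℝ))) f z = 0 := by
  unfold pd
  exact (fderiv ℝ f z).map_zero

lemma pd_fst3 {w : E3} (v : E3) : pd v (fun w : E3 => w.1) w = v.1 := by
  unfold pd; rw [(hasFDerivAt_fst (𝕜 := ℝ) (p := w)).fderiv]; rfl

lemma pd_slice0 {f : E3 → ℝ} {s : ℝ} {z : ℝ × ℝ} (hf : DifferentiableAt ℝ f (s, z))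
    (v : ℝ × ℝ) : pd v (fun z' => f (s, z')) z = pd ((0:ℝ), v) f (s, z) := by
  have h1 : HasFDerivAt (fun z' : ℝ × ℝ => ((s, z') : E3))
      ((0 : (ℝ×ℝ) →L[ℝ] ℝ).prod (ContinuousLinearMap.id ℝ (ℝ×ℝ))) z :=
    (hasFDerivAt_const s z).prodMk (hasFDerivAt_id z)
  have h := hf.hasFDerivAt.comp z h1
  unfold pd
  change (fderiv ℝ (f ∘ Prod.mk s) z) v = _
  rw [h.fderiv]; rfl

lemma sliceX {f : ℝ × ℝ → ℝ} {x y : ℝ} (hf : DifferentiableAt ℝ f (x, y)) :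
    HasDerivAt (fun s => f (s, y)) (pd ((1:ℝ),(0:ℝ)) f (x, y)) x := by
  have h1 : HasDerivAt (fun s : ℝ => ((s, y) : ℝ × ℝ)) ((1:ℝ),(0:ℝ)) x :=
    (hasDerivAt_id x).prodMk (hasDerivAt_const x y)
  exact hf.hasFDerivAt.comp_hasDerivAt x h1

lemma sliceY {f : ℝ × ℝ → ℝ} {x y : ℝ} (hf : DifferentiableAt ℝ f (x, y)) :
    HasDerivAt (fun t => f (x, t)) (pd ((0:ℝ),(1:ℝ)) f (x, y)) y := by
  have h1 : HasDerivAt (fun t : ℝ => ((x, t) : ℝ × ℝ)) ((0:ℝ),(1:ℝ)) y :=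
    (hasDerivAt_const y x).prodMk (hasDerivAt_id y)
  exact hf.hasFDerivAt.comp_hasDerivAt y h1

lemma slice1 {f : E3 → ℝ} {s x y : ℝ} (hf : DifferentiableAt ℝ f (s, (x, y))) :
    HasDerivAt (fun t => f (t, (x, y))) (pd ((1:ℝ),((0:ℝ),(0:ℝ))) f (s, (x, y))) s := by
  have h1 : HasDerivAt (fun t : ℝ => ((t, (x, y)) : E3)) ((1:ℝ),((0:ℝ),(0:ℝ))) s :=
    (hasDerivAt_id s).prodMk (hasDerivAt_const s (x, y))
  exact hf.hasFDerivAt.comp_hasDerivAt s h1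

lemma slice2 {f : E3 → ℝ} {s x y : ℝ} (hf : DifferentiableAt ℝ f (s, (x, y))) :
    HasDerivAt (fun a => f (s, (a, y))) (pd ((0:ℝ),((1:ℝ),(0:ℝ))) f (s, (x, y))) x := by
  have h1 : HasDerivAt (fun a : ℝ => ((s, (a, y)) : E3)) ((0:ℝ),((1:ℝ),(0:ℝ))) x :=
    (hasDerivAt_const x s).prodMk ((hasDerivAt_id x).prodMk (hasDerivAt_const x y))
  exact hf.hasFDerivAt.comp_hasDerivAt x h1

lemma iter_sliceX {f : ℝ × ℝ → ℝ} (hf : ContDiff ℝ (⊤ : ℕ∞) f) (y : ℝ) (n : ℕ) :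
    (iteratedDeriv n (fun s => f (s, y))) = fun x => (pd ((1:ℝ),(0:ℝ)))^[n] f (x, y) := by
  induction n with
  | zero => simp [iteratedDeriv_zero]
  | succ n ih =>
    rw [iteratedDeriv_succ, ih]
    funext x
    rw [Function.iterate_succ_apply']
    exact (sliceX (((pd_iter_contDiff hf _ n).differentiable (by simp)) (x, y))).deriv

lemma iter_slice2 {f : E3 → ℝ} (hf : ContDiff ℝ (⊤ : ℕ∞) f) (s y : ℝ) (n : ℕ) :
    (iteratedDeriv n (fun a => f (s, (a, y)))) =
      fun x => (pd ((0:ℝ),((1:ℝ),(0:ℝ))))^[n] f (s, (x, y)) := by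
  induction n with
  | zero => simp [iteratedDeriv_zero]
  | succ n ih =>
    rw [iteratedDeriv_succ, ih]
    funext x
    rw [Function.iterate_succ_apply']
    exact (slice2 (((pd_iter_contDiff hf _ n).differentiable (by simp)) (s, (x, y)))).deriv

lemma iter_restrict {f : E3 → ℝ} (hf : ContDiff ℝ (⊤ : ℕ∞) f) (s : ℝ) (n : ℕ) :
    (fun z => (pd ((0:ℝ),((1:ℝ),(0:ℝ))))^[n] f (s, z)) =
      (pd ((1:ℝ),(0:ℝ)))^[n] (fun z => f (s, z)) := by
  induction n with
  | zero => rfl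
  | succ n ih =>
    rw [Function.iterate_succ_apply', Function.iterate_succ_apply', ← ih]
    funext z
    exact (pd_slice0 (((pd_iter_contDiff hf _ n).differentiable (by simp)) (s, z))
      ((1:ℝ),(0:ℝ))).symm



/-- For the Liouville equation `u_{xy} = e^{2u}` with integral
`w = u_x² − u_{xx}`, the operator `□ = u_x + (1/2)Dₓ` maps every differential
function `p(x,[w])` to a symmetry: `φ = □(p)` satisfies the determining
equation `D_xD_y(φ) = 2e^{2u}·φ` on solutions; moreover the commutator
`[□(p), □(q)]` corresponds on the domain to the bracket
`p_x q − p q_x` plus the standard evolutionary terms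
`Ev_{□(p)}(q) − Ev_{□(q)}(p)`. -/
theorem stmt_18 (N : ℕ)
    (u : ℝ → ℝ → ℝ) (hu : ContDiff ℝ (⊤ : ℕ∞) (Function.uncurry u))
    (hsol : ∀ x y : ℝ, deriv (fun t => deriv (fun s => u s t) x) y
      = Real.exp (2 * u x y))
    (p q : ℝ → (Fin N → ℝ) → ℝ)
    (hp : ContDiff ℝ (⊤ : ℕ∞) (Function.uncurry p)) (hq : ContDiff ℝ (⊤ : ℕ∞) (Function.uncurry q))
    -- the integral w = u_x² − u_{xx} of an arbitrary field v
    (W : (ℝ → ℝ → ℝ) → ℝ → ℝ → ℝ)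
    (hW : ∀ (v : ℝ → ℝ → ℝ) (x y : ℝ), W v x y =
      (deriv (fun s => v s y) x) ^ 2 - iteratedDeriv 2 (fun s => v s y) x)
    -- composition of a differential function r(x,[w]) with the jet of w[v]
    (Pf : (ℝ → (Fin N → ℝ) → ℝ) → (ℝ → ℝ → ℝ) → ℝ → ℝ → ℝ)
    (hPf : ∀ (r : ℝ → (Fin N → ℝ) → ℝ) (v : ℝ → ℝ → ℝ) (x y : ℝ),
      Pf r v x y = r x (fun n => iteratedDeriv (n : ℕ) (fun s => W v s y) x))
    -- the operator □ = u_x + (1/2)Dₓ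
    (Box : (ℝ → (Fin N → ℝ) → ℝ) → (ℝ → ℝ → ℝ) → ℝ → ℝ → ℝ)
    (hBox : ∀ (r : ℝ → (Fin N → ℝ) → ℝ) (v : ℝ → ℝ → ℝ) (x y : ℝ),
      Box r v x y = deriv (fun s => v s y) x * Pf r v x y
        + (1/2) * deriv (fun s => Pf r v s y) x)
    -- evolutionary (Gateaux) derivative of a functional F in the direction φ
    (Ev : ((ℝ → ℝ → ℝ) → ℝ → ℝ → ℝ) → ((ℝ → ℝ → ℝ) → ℝ → ℝ → ℝ) →
      (ℝ → ℝ → ℝ) → ℝ → ℝ → ℝ)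
    (hEv : ∀ (φ F : (ℝ → ℝ → ℝ) → ℝ → ℝ → ℝ) (v : ℝ → ℝ → ℝ) (x y : ℝ),
      Ev φ F v x y = deriv (fun s : ℝ => F (fun a b => v a b + s * φ v a b) x y) 0) :
    -- (1) φ = □(p) is a symmetry: D_xD_y(φ) = 2e^{2u}φ on the solution u
    (∀ x y : ℝ,
      deriv (fun t => deriv (fun s => Box p u s t) x) y
        = 2 * Real.exp (2 * u x y) * Box p u x y) ∧
    -- (2) [□(p), □(q)] = □(p_x q − p q_x + Ev_{□(p)}(q) − Ev_{□(q)}(p))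
    (∀ x y : ℝ,
      Ev (Box p) (Box q) u x y - Ev (Box q) (Box p) u x y =
        (fun Arg : ℝ → ℝ → ℝ =>
          deriv (fun s => u s y) x * Arg x y + (1/2) * deriv (fun s => Arg s y) x)
        (fun a b =>
          deriv (fun s => Pf p u s b) a * Pf q u a b
            - Pf p u a b * deriv (fun s => Pf q u s b) a
            + Ev (Box p) (Pf q) u a b - Ev (Box q) (Pf p) u a b)) := by
  have hFs : ContDiff ℝ (⊤ : ℕ∞) (Function.uncurry u) := hu
  set F : ℝ × ℝ → ℝ := Function.uncurry u with hFdef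
  have hDxF : ContDiff ℝ (⊤ : ℕ∞) (pd ((1:ℝ),(0:ℝ)) F) := pd_contDiff hFs _
  have hDxDxF : ContDiff ℝ (⊤ : ℕ∞) (pd ((1:ℝ),(0:ℝ)) (pd ((1:ℝ),(0:ℝ)) F)) := pd_contDiff hDxF _
  -- derivative of a slice of u
  have hux : ∀ a b : ℝ, deriv (fun s => u s b) a = pd ((1:ℝ),(0:ℝ)) F (a, b) :=
    fun a b => (sliceX ((hFs.differentiable (by simp)) (a, b))).deriv
  -- the integral W on the solution u
  set WF : ℝ × ℝ → ℝ := fun z => pd ((1:ℝ),(0:ℝ)) F z * pd ((1:ℝ),(0:ℝ)) F z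
      - pd ((1:ℝ),(0:ℝ)) (pd ((1:ℝ),(0:ℝ)) F) z with hWFdef
  have hWFs : ContDiff ℝ (⊤ : ℕ∞) WF := (hDxF.mul hDxF).sub hDxDxF
  have hJs : ∀ n, ContDiff ℝ (⊤ : ℕ∞) ((pd ((1:ℝ),(0:ℝ)))^[n] WF) := pd_iter_contDiff hWFs _
  have hWu : ∀ a b : ℝ, W u a b = WF (a, b) := by
    intro a b
    rw [hW]
    have h1 : deriv (fun s => u s b) a = pd ((1:ℝ),(0:ℝ)) F (a, b) := hux a b
    have h2 : iteratedDeriv 2 (fun s => u s b) a = (pd ((1:ℝ),(0:ℝ)))^[2] F (a, b) :=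
      congrFun (iter_sliceX hFs b 2) a
    have h3 : (pd ((1:ℝ),(0:ℝ)))^[2] F
        = pd ((1:ℝ),(0:ℝ)) (pd ((1:ℝ),(0:ℝ)) F) := rfl
    rw [h1, h2, h3, hWFdef]
    ring
  -- the equation
  have hDyDxF : ∀ z : ℝ × ℝ,
      pd ((0:ℝ),(1:ℝ)) (pd ((1:ℝ),(0:ℝ)) F) z = Real.exp (2 * F z) := by
    rintro ⟨a, b⟩
    have h1 : (fun t => deriv (fun s => u s t) a)
        = fun t => pd ((1:ℝ),(0:ℝ)) F (a, t) := funext fun t => hux a t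
    have h2 := hsol a b
    rw [h1] at h2
    have h2' : deriv (fun t => pd ((1:ℝ),(0:ℝ)) F (a, t)) b = Real.exp (2 * F (a, b)) := h2
    rw [← h2']
    exact (sliceY ((hDxF.differentiable (by simp)) (a, b))).deriv.symm
  -- y-derivative of WF vanishes
  have hDyWF : ∀ z : ℝ × ℝ, pd ((0:ℝ),(1:ℝ)) WF z = 0 := by
    intro z
    rw [hWFdef]
    rw [pd_sub ((hDxF.mul hDxF).differentiable (by simp) z) ((hDxDxF.differentiable (by simp)) z)]
    rw [pd_mul ((hDxF.differentiable (by simp)) z) ((hDxF.differentiable (by simp)) z)]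
    rw [pd_swap hDxF ((0:ℝ),(1:ℝ)) ((1:ℝ),(0:ℝ)) z]
    have hfun : pd ((0:ℝ),(1:ℝ)) (pd ((1:ℝ),(0:ℝ)) F) = fun z => Real.exp (2 * F z) :=
      funext hDyDxF
    rw [hfun]
    rw [pd_exp2 ((hFs.differentiable (by simp)) z) ((1:ℝ),(0:ℝ))]
    beta_reduce
    ring
  -- hence all x-jets of WF are independent of y
  have hDyJ : ∀ n, ∀ z : ℝ × ℝ, pd ((0:ℝ),(1:ℝ)) ((pd ((1:ℝ),(0:ℝ)))^[n] WF) z = 0 := by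
    intro n
    induction n with
    | zero => exact hDyWF
    | succ n ih =>
      intro z
      rw [Function.iterate_succ_apply']
      rw [pd_swap (hJs n) ((0:ℝ),(1:ℝ)) ((1:ℝ),(0:ℝ)) z]
      have hz : pd ((0:ℝ),(1:ℝ)) ((pd ((1:ℝ),(0:ℝ)))^[n] WF) = fun _ => (0:ℝ) := funext ih
      rw [hz]
      simp [pd]
  have hJconst : ∀ n, ∀ a b : ℝ,
      (pd ((1:ℝ),(0:ℝ)))^[n] WF (a, b) = (pd ((1:ℝ),(0:ℝ)))^[n] WF (a, 0) := by
    intro n a b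
    have hdiff : Differentiable ℝ (fun t => (pd ((1:ℝ),(0:ℝ)))^[n] WF (a, t)) := fun t =>
      (sliceY (((hJs n).differentiable (by simp)) (a, t))).differentiableAt
    have hzero : ∀ t, deriv (fun t => (pd ((1:ℝ),(0:ℝ)))^[n] WF (a, t)) t = 0 := by
      intro t
      rw [(sliceY (((hJs n).differentiable (by simp)) (a, t))).deriv]
      exact hDyJ n (a, t)
    exact is_const_of_deriv_eq_zero hdiff hzero b 0
  -- Pf on the solution
  have hPfu : ∀ (r : ℝ → (Fin N → ℝ) → ℝ) (a b : ℝ),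
      Pf r u a b = r a (fun n => (pd ((1:ℝ),(0:ℝ)))^[n] WF (a, 0)) := by
    intro r a b
    rw [hPf]
    congr 1
    funext n
    have h1 : (fun s => W u s b) = fun s => WF (s, b) := funext fun s => hWu s b
    rw [h1]
    rw [congrFun (iter_sliceX hWFs b n) a]
    exact hJconst n a b
  -- smoothness of the 1-d reductions
  have hR0s : ∀ r : ℝ → (Fin N → ℝ) → ℝ, ContDiff ℝ (⊤ : ℕ∞) (Function.uncurry r) →
      ContDiff ℝ (⊤ : ℕ∞) (fun a => r a (fun n => (pd ((1:ℝ),(0:ℝ)))^[n] WF (a, 0))) := by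
    intro r hr
    exact hr.comp (contDiff_id.prodMk (contDiff_pi.mpr (fun n =>
      (hJs n).comp (contDiff_id.prodMk contDiff_const))))
  set P0 : ℝ → ℝ := fun a => p a (fun n => (pd ((1:ℝ),(0:ℝ)))^[n] WF (a, 0)) with hP0def
  set Q0 : ℝ → ℝ := fun a => q a (fun n => (pd ((1:ℝ),(0:ℝ)))^[n] WF (a, 0)) with hQ0def
  have hP0s : ContDiff ℝ (⊤ : ℕ∞) P0 := hR0s p hp
  have hQ0s : ContDiff ℝ (⊤ : ℕ∞) Q0 := hR0s q hq
  have hderiv_pd : ∀ g : ℝ → ℝ, deriv g = pd (1:ℝ) g := fun g => rfl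
  have hdP0s : ContDiff ℝ (⊤ : ℕ∞) (deriv P0) := by
    rw [hderiv_pd]; exact pd_contDiff hP0s 1
  have hdQ0s : ContDiff ℝ (⊤ : ℕ∞) (deriv Q0) := by
    rw [hderiv_pd]; exact pd_contDiff hQ0s 1
  have hPfuP : ∀ a b : ℝ, Pf p u a b = P0 a := fun a b => hPfu p a b
  have hPfuQ : ∀ a b : ℝ, Pf q u a b = Q0 a := fun a b => hPfu q a b
  -- the symmetry Φ = □(p) on the solution
  set Phi : ℝ × ℝ → ℝ := fun z => pd ((1:ℝ),(0:ℝ)) F z * P0 z.1 + (1/2) * deriv P0 z.1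
    with hPhidef
  set Psi : ℝ × ℝ → ℝ := fun z => pd ((1:ℝ),(0:ℝ)) F z * Q0 z.1 + (1/2) * deriv Q0 z.1
    with hPsidef
  have hPhis : ContDiff ℝ (⊤ : ℕ∞) Phi :=
    (hDxF.mul (hP0s.comp contDiff_fst)).add (contDiff_const.mul (hdP0s.comp contDiff_fst))
  have hPsis : ContDiff ℝ (⊤ : ℕ∞) Psi :=
    (hDxF.mul (hQ0s.comp contDiff_fst)).add (contDiff_const.mul (hdQ0s.comp contDiff_fst))
  have hBoxp : ∀ a b : ℝ, Box p u a b = Phi (a, b) := by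
    intro a b
    rw [hBox]
    have h3 : (fun s => Pf p u s b) = P0 := funext fun s => hPfuP s b
    rw [hux a b, hPfuP a b, h3, hPhidef]
  have hBoxq : ∀ a b : ℝ, Box q u a b = Psi (a, b) := by
    intro a b
    rw [hBox]
    have h3 : (fun s => Pf q u s b) = Q0 := funext fun s => hPfuQ s b
    rw [hux a b, hPfuQ a b, h3, hPsidef]
  constructor
  · -- Part (1)
    intro x y
    have hinner : (fun t => deriv (fun s => Box p u s t) x)
        = fun t => pd ((1:ℝ),(0:ℝ)) Phi (x, t) := by
      funext t
      have h1 : (fun s => Box p u s t) = fun s => Phi (s, t) := funext fun s => hBoxp s t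
      rw [h1]
      exact (sliceX ((hPhis.differentiable (by simp)) (x, t))).deriv
    rw [hinner]
    rw [(sliceY (((pd_contDiff hPhis ((1:ℝ),(0:ℝ))).differentiable (by simp)) (x, y))).deriv]
    rw [pd_swap hPhis ((0:ℝ),(1:ℝ)) ((1:ℝ),(0:ℝ)) (x, y)]
    have hDyPhi : pd ((0:ℝ),(1:ℝ)) Phi = fun z => Real.exp (2 * F z) * P0 z.1 := by
      funext z
      obtain ⟨a, b⟩ := z
      rw [hPhidef]
      have d1 : DifferentiableAt ℝ (fun z : ℝ × ℝ => pd ((1:ℝ),(0:ℝ)) F z * P0 z.1) (a, b) :=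
        ((hDxF.mul (hP0s.comp contDiff_fst)).differentiable (by simp)) (a, b)
      have d2 : DifferentiableAt ℝ (fun z : ℝ × ℝ => (1/2 : ℝ) * deriv P0 z.1) (a, b) :=
        ((contDiff_const.mul (hdP0s.comp contDiff_fst)).differentiable (by simp)) (a, b)
      have d3 : DifferentiableAt ℝ (fun z : ℝ × ℝ => P0 z.1) (a, b) :=
        ((hP0s.comp contDiff_fst).differentiable (by simp)) (a, b)
      have d4 : DifferentiableAt ℝ (fun z : ℝ × ℝ => deriv P0 z.1) (a, b) :=
        ((hdP0s.comp contDiff_fst).differentiable (by simp)) (a, b)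
      rw [pd_add d1 d2]
      rw [pd_mul ((hDxF.differentiable (by simp)) (a, b)) d3]
      rw [pd_const_mul d4]
      rw [pd_comp_fst ((hP0s.differentiable (by simp)) a) ((0:ℝ),(1:ℝ))]
      rw [pd_comp_fst ((hdP0s.differentiable (by simp)) a) ((0:ℝ),(1:ℝ))]
      rw [hDyDxF (a, b)]
      norm_num
      ring
    rw [hDyPhi]
    have d5 : DifferentiableAt ℝ (fun z : ℝ × ℝ => Real.exp (2 * F z)) (x, y) :=
      ((Real.contDiff_exp.comp (contDiff_const.mul hFs)).differentiable (by simp)) (x, y)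
    have d6 : DifferentiableAt ℝ (fun z : ℝ × ℝ => P0 z.1) (x, y) :=
      ((hP0s.comp contDiff_fst).differentiable (by simp)) (x, y)
    rw [pd_mul d5 d6]
    rw [pd_exp2 ((hFs.differentiable (by simp)) (x, y)) ((1:ℝ),(0:ℝ))]
    rw [pd_comp_fst ((hP0s.differentiable (by simp)) x) ((1:ℝ),(0:ℝ))]
    rw [hBoxp x y, hPhidef]
    have hFu : F (x, y) = u x y := rfl
    rw [hFu]
    ring
  · -- Part (2)
    intro x y
    have hD2lin : ∀ (h k : ℝ × ℝ → ℝ), ContDiff ℝ (⊤ : ℕ∞) h → ContDiff ℝ (⊤ : ℕ∞) k →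
        ∀ w : E3, pd ((0:ℝ),((1:ℝ),(0:ℝ))) (fun w : E3 => h w.2 + w.1 * k w.2) w
          = pd ((1:ℝ),(0:ℝ)) h w.2 + w.1 * pd ((1:ℝ),(0:ℝ)) k w.2 := by
      intro h k hh hk w
      have d1 : DifferentiableAt ℝ (fun w : E3 => h w.2) w :=
        ((hh.comp contDiff_snd).differentiable (by simp)) w
      have d2 : DifferentiableAt ℝ (fun w : E3 => w.1 * k w.2) w :=
        ((contDiff_fst.mul (hk.comp contDiff_snd)).differentiable (by simp)) w
      have d3 : DifferentiableAt ℝ (fun w : E3 => w.1) w := ((contDiff_fst (n := (⊤ : ℕ∞))).differentiable (by simp)) w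
      have d4 : DifferentiableAt ℝ (fun w : E3 => k w.2) w :=
        ((hk.comp contDiff_snd).differentiable (by simp)) w
      rw [pd_add d1 d2, pd_mul d3 d4]
      rw [pd_comp_snd (f := h) ((hh.differentiable (by simp)) w.2) ((0:ℝ),((1:ℝ),(0:ℝ)))]
      rw [pd_comp_snd (f := k) ((hk.differentiable (by simp)) w.2) ((0:ℝ),((1:ℝ),(0:ℝ)))]
      rw [pd_fst3]
      norm_num
    have hD1lin : ∀ (h k : ℝ × ℝ → ℝ), ContDiff ℝ (⊤ : ℕ∞) h → ContDiff ℝ (⊤ : ℕ∞) k →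
        ∀ w : E3, pd ((1:ℝ),((0:ℝ),(0:ℝ))) (fun w : E3 => h w.2 + w.1 * k w.2) w = k w.2 := by
      intro h k hh hk w
      have d1 : DifferentiableAt ℝ (fun w : E3 => h w.2) w :=
        ((hh.comp contDiff_snd).differentiable (by simp)) w
      have d2 : DifferentiableAt ℝ (fun w : E3 => w.1 * k w.2) w :=
        ((contDiff_fst.mul (hk.comp contDiff_snd)).differentiable (by simp)) w
      have d3 : DifferentiableAt ℝ (fun w : E3 => w.1) w := ((contDiff_fst (n := (⊤ : ℕ∞))).differentiable (by simp)) w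
      have d4 : DifferentiableAt ℝ (fun w : E3 => k w.2) w :=
        ((hk.comp contDiff_snd).differentiable (by simp)) w
      rw [pd_add d1 d2, pd_mul d3 d4]
      rw [pd_comp_snd (f := h) ((hh.differentiable (by simp)) w.2) ((1:ℝ),((0:ℝ),(0:ℝ)))]
      rw [pd_comp_snd (f := k) ((hk.differentiable (by simp)) w.2) ((1:ℝ),((0:ℝ),(0:ℝ)))]
      rw [pd_fst3]
      norm_num [pd_zero, pd_pair_zero]
    have hDxDir : ∀ (g : ℝ → ℝ), ContDiff ℝ (⊤ : ℕ∞) g → ContDiff ℝ (⊤ : ℕ∞) (deriv g) → ∀ a b : ℝ,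
        pd ((1:ℝ),(0:ℝ)) (fun z : ℝ × ℝ => pd ((1:ℝ),(0:ℝ)) F z * g z.1
          + (1/2) * deriv g z.1) (a, b)
        = pd ((1:ℝ),(0:ℝ)) (pd ((1:ℝ),(0:ℝ)) F) (a, b) * g a
          + pd ((1:ℝ),(0:ℝ)) F (a, b) * deriv g a + (1/2) * deriv (deriv g) a := by
      intro g hg hdg a b
      have d1 : DifferentiableAt ℝ (fun z : ℝ × ℝ => pd ((1:ℝ),(0:ℝ)) F z * g z.1) (a, b) :=
        ((hDxF.mul (hg.comp contDiff_fst)).differentiable (by simp)) (a, b)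
      have d2 : DifferentiableAt ℝ (fun z : ℝ × ℝ => (1/2 : ℝ) * deriv g z.1) (a, b) :=
        ((contDiff_const.mul (hdg.comp contDiff_fst)).differentiable (by simp)) (a, b)
      have d3 : DifferentiableAt ℝ (fun z : ℝ × ℝ => g z.1) (a, b) :=
        ((hg.comp contDiff_fst).differentiable (by simp)) (a, b)
      have d4 : DifferentiableAt ℝ (fun z : ℝ × ℝ => deriv g z.1) (a, b) :=
        ((hdg.comp contDiff_fst).differentiable (by simp)) (a, b)
      rw [pd_add d1 d2, pd_mul ((hDxF.differentiable (by simp)) (a, b)) d3, pd_const_mul d4]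
      rw [pd_comp_fst ((hg.differentiable (by simp)) a) ((1:ℝ),(0:ℝ))]
      rw [pd_comp_fst ((hdg.differentiable (by simp)) a) ((1:ℝ),(0:ℝ))]
      norm_num
      ring
    have KEY : ∀ (r rd : ℝ → (Fin N → ℝ) → ℝ),
        ContDiff ℝ (⊤ : ℕ∞) (Function.uncurry r) →
        ∀ (R0 : ℝ → ℝ), (∀ a b : ℝ, Pf r u a b = R0 a) →
        ∀ (Dir : ℝ × ℝ → ℝ), ContDiff ℝ (⊤ : ℕ∞) Dir →
        (∀ a b : ℝ, Box rd u a b = Dir (a, b)) →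
        ∃ A : ℝ × ℝ → ℝ, ContDiff ℝ (⊤ : ℕ∞) A ∧
          (∀ a b : ℝ, Ev (Box rd) (Pf r) u a b = A (a, b)) ∧
          (∀ a b : ℝ, Ev (Box rd) (Box r) u a b =
            pd ((1:ℝ),(0:ℝ)) Dir (a, b) * R0 a
              + pd ((1:ℝ),(0:ℝ)) F (a, b) * A (a, b)
              + (1/2) * pd ((1:ℝ),(0:ℝ)) A (a, b)) := by
      intro r rd hr R0 hR0 Dir hDirs hBoxrd
      set G : E3 → ℝ := fun w => F w.2 + w.1 * Dir w.2 with hGdef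
      have hGs : ContDiff ℝ (⊤ : ℕ∞) G :=
        (hFs.comp contDiff_snd).add (contDiff_fst.mul (hDirs.comp contDiff_snd))
      have hD2Gs : ContDiff ℝ (⊤ : ℕ∞) (pd ((0:ℝ),((1:ℝ),(0:ℝ))) G) := pd_contDiff hGs _
      have hD2Gfun : pd ((0:ℝ),((1:ℝ),(0:ℝ))) G
          = fun w : E3 => pd ((1:ℝ),(0:ℝ)) F w.2 + w.1 * pd ((1:ℝ),(0:ℝ)) Dir w.2 := by
        funext w
        rw [hGdef]
        exact hD2lin F Dir hFs hDirs w
      have hD2D2G : ∀ w : E3, pd ((0:ℝ),((1:ℝ),(0:ℝ))) (pd ((0:ℝ),((1:ℝ),(0:ℝ))) G) w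
          = pd ((1:ℝ),(0:ℝ)) (pd ((1:ℝ),(0:ℝ)) F) w.2
            + w.1 * pd ((1:ℝ),(0:ℝ)) (pd ((1:ℝ),(0:ℝ)) Dir) w.2 := by
        intro w
        rw [hD2Gfun]
        exact hD2lin _ _ hDxF (pd_contDiff hDirs _) w
      have hD1D2G : ∀ w : E3, pd ((1:ℝ),((0:ℝ),(0:ℝ))) (pd ((0:ℝ),((1:ℝ),(0:ℝ))) G) w
          = pd ((1:ℝ),(0:ℝ)) Dir w.2 := by
        intro w
        rw [hD2Gfun]
        exact hD1lin _ _ hDxF (pd_contDiff hDirs _) w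
      set W3 : E3 → ℝ := fun w => pd ((0:ℝ),((1:ℝ),(0:ℝ))) G w * pd ((0:ℝ),((1:ℝ),(0:ℝ))) G w
          - pd ((0:ℝ),((1:ℝ),(0:ℝ))) (pd ((0:ℝ),((1:ℝ),(0:ℝ))) G) w with hW3def
      have hW3s : ContDiff ℝ (⊤ : ℕ∞) W3 := (hD2Gs.mul hD2Gs).sub (pd_contDiff hD2Gs _)
      have hWv : ∀ s a b : ℝ, W (fun a b => G (s,(a,b))) a b = W3 (s,(a,b)) := by
        intro s a b
        have h0 : W (fun a b => G (s,(a,b))) a b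
            = (deriv (fun t => G (s,(t,b))) a)^2
              - iteratedDeriv 2 (fun t => G (s,(t,b))) a := hW _ a b
        rw [h0]
        rw [(slice2 ((hGs.differentiable (by simp)) (s,(a,b)))).deriv]
        rw [congrFun (iter_slice2 hGs s b 2) a]
        have h3 : (pd ((0:ℝ),((1:ℝ),(0:ℝ))))^[2] G
            = pd ((0:ℝ),((1:ℝ),(0:ℝ))) (pd ((0:ℝ),((1:ℝ),(0:ℝ))) G) := rfl
        rw [h3, hW3def]
        ring
      set R3 : E3 → ℝ := fun w => r w.2.1 (fun n => (pd ((0:ℝ),((1:ℝ),(0:ℝ))))^[(n:ℕ)] W3 w)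
        with hR3def
      have hR3s : ContDiff ℝ (⊤ : ℕ∞) R3 := hr.comp ((contDiff_fst.comp contDiff_snd).prodMk
        (contDiff_pi.mpr fun n => pd_iter_contDiff hW3s _ (n:ℕ)))
      have hPfr3 : ∀ s a b : ℝ, Pf r (fun a b => G (s,(a,b))) a b = R3 (s,(a,b)) := by
        intro s a b
        have h0 : Pf r (fun a b => G (s,(a,b))) a b
            = r a (fun n => iteratedDeriv (n:ℕ)
                (fun t => W (fun a b => G (s,(a,b))) t b) a) := hPf _ _ a b
        rw [h0]
        have h1 : (fun t => W (fun a b => G (s,(a,b))) t b) = fun t => W3 (s,(t,b)) :=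
          funext fun t => hWv s t b
        rw [h1]
        have h2 : R3 (s,(a,b))
            = r a (fun n => (pd ((0:ℝ),((1:ℝ),(0:ℝ))))^[(n:ℕ)] W3 (s,(a,b))) := rfl
        rw [h2]
        congr 1
        funext n
        exact congrFun (iter_slice2 hW3s s b (n:ℕ)) a
      have hfield : ∀ s : ℝ, (fun a b => u a b + s * Box rd u a b)
          = fun a b => G (s,(a,b)) := by
        intro s
        funext a b
        rw [hBoxrd a b]
        rfl
      set B3 : E3 → ℝ := fun w => pd ((0:ℝ),((1:ℝ),(0:ℝ))) G w * R3 w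
          + (1/2) * pd ((0:ℝ),((1:ℝ),(0:ℝ))) R3 w with hB3def
      have hB3s : ContDiff ℝ (⊤ : ℕ∞) B3 :=
        (hD2Gs.mul hR3s).add (contDiff_const.mul (pd_contDiff hR3s _))
      have hBoxr3 : ∀ s a b : ℝ, Box r (fun a b => G (s,(a,b))) a b = B3 (s,(a,b)) := by
        intro s a b
        have h0 : Box r (fun a b => G (s,(a,b))) a b
            = deriv (fun t => G (s,(t,b))) a * Pf r (fun a b => G (s,(a,b))) a b
              + (1/2) * deriv (fun t => Pf r (fun a b => G (s,(a,b))) t b) a := hBox r _ a b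
        rw [h0]
        rw [(slice2 ((hGs.differentiable (by simp)) (s,(a,b)))).deriv]
        rw [hPfr3 s a b]
        have h1 : (fun t => Pf r (fun a b => G (s,(a,b))) t b) = fun t => R3 (s,(t,b)) :=
          funext fun t => hPfr3 s t b
        rw [h1]
        rw [(slice2 ((hR3s.differentiable (by simp)) (s,(a,b)))).deriv]
      have hEvBB : ∀ a b : ℝ, Ev (Box rd) (Box r) u a b
          = pd ((1:ℝ),((0:ℝ),(0:ℝ))) B3 (0,(a,b)) := by
        intro a b
        rw [hEv]
        have h1 : (fun s : ℝ => Box r (fun a' b' => u a' b' + s * Box rd u a' b') a b)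
            = fun s => B3 (s,(a,b)) := by
          funext s
          rw [hfield s]
          exact hBoxr3 s a b
        rw [h1]
        exact (slice1 ((hB3s.differentiable (by simp)) (0,(a,b)))).deriv
      have hEvPf : ∀ a b : ℝ, Ev (Box rd) (Pf r) u a b
          = pd ((1:ℝ),((0:ℝ),(0:ℝ))) R3 (0,(a,b)) := by
        intro a b
        rw [hEv]
        have h1 : (fun s : ℝ => Pf r (fun a' b' => u a' b' + s * Box rd u a' b') a b)
            = fun s => R3 (s,(a,b)) := by
          funext s
          rw [hfield s]
          exact hPfr3 s a b
        rw [h1]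
        exact (slice1 ((hR3s.differentiable (by simp)) (0,(a,b)))).deriv
      have hD2G0 : ∀ z : ℝ × ℝ, pd ((0:ℝ),((1:ℝ),(0:ℝ))) G (0,z) = pd ((1:ℝ),(0:ℝ)) F z := by
        intro z
        rw [hD2Gfun]
        norm_num
      have hW30 : (fun z : ℝ × ℝ => W3 (0,z)) = WF := by
        funext z
        have e1 : W3 (0,z) = pd ((0:ℝ),((1:ℝ),(0:ℝ))) G (0,z) * pd ((0:ℝ),((1:ℝ),(0:ℝ))) G (0,z)
            - pd ((0:ℝ),((1:ℝ),(0:ℝ))) (pd ((0:ℝ),((1:ℝ),(0:ℝ))) G) (0,z) := rfl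
        rw [e1, hD2G0 z]
        have e2 : pd ((0:ℝ),((1:ℝ),(0:ℝ))) (pd ((0:ℝ),((1:ℝ),(0:ℝ))) G) (0,z)
            = pd ((1:ℝ),(0:ℝ)) (pd ((1:ℝ),(0:ℝ)) F) z := by
          rw [hD2D2G (0,z)]
          norm_num
        rw [e2, hWFdef]
      have hR30 : ∀ z : ℝ × ℝ, R3 (0,z) = R0 z.1 := by
        intro z
        have h2 : ∀ n : ℕ, (pd ((0:ℝ),((1:ℝ),(0:ℝ))))^[n] W3 (0,z)
            = (pd ((1:ℝ),(0:ℝ)))^[n] WF (z.1, 0) := by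
          intro n
          rw [congrFun (iter_restrict hW3s 0 n) z]
          rw [hW30]
          obtain ⟨z1, z2⟩ := z
          exact hJconst n z1 z2
        have h1 : R3 (0,z) = r z.1 (fun n => (pd ((0:ℝ),((1:ℝ),(0:ℝ))))^[(n:ℕ)] W3 (0,z)) := rfl
        have h3 : r z.1 (fun n => (pd ((1:ℝ),(0:ℝ)))^[(n:ℕ)] WF (z.1,0)) = R0 z.1 :=
          (hPfu r z.1 0).symm.trans (hR0 z.1 0)
        rw [h1, ← h3]
        congr 1
        funext n
        exact h2 (n:ℕ)
      refine ⟨fun z => pd ((1:ℝ),((0:ℝ),(0:ℝ))) R3 (0,z),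
        (pd_contDiff hR3s _).comp (contDiff_const.prodMk contDiff_id),
        fun a b => hEvPf a b, ?_⟩
      intro a b
      beta_reduce
      rw [hEvBB a b]
      have d1 : DifferentiableAt ℝ
          (fun w : E3 => pd ((0:ℝ),((1:ℝ),(0:ℝ))) G w * R3 w) (0,(a,b)) :=
        ((hD2Gs.mul hR3s).differentiable (by simp)) _
      have d2 : DifferentiableAt ℝ
          (fun w : E3 => (1/2:ℝ) * pd ((0:ℝ),((1:ℝ),(0:ℝ))) R3 w) (0,(a,b)) :=
        ((contDiff_const.mul (pd_contDiff hR3s _)).differentiable (by simp)) _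
      have h0 : pd ((1:ℝ),((0:ℝ),(0:ℝ))) B3 (0,(a,b))
          = pd ((1:ℝ),((0:ℝ),(0:ℝ))) (fun w : E3 => pd ((0:ℝ),((1:ℝ),(0:ℝ))) G w * R3 w
            + (1/2) * pd ((0:ℝ),((1:ℝ),(0:ℝ))) R3 w) (0,(a,b)) := rfl
      rw [h0, pd_add d1 d2]
      rw [pd_mul ((hD2Gs.differentiable (by simp)) _) ((hR3s.differentiable (by simp)) _)]
      rw [pd_const_mul (((pd_contDiff hR3s ((0:ℝ),((1:ℝ),(0:ℝ)))).differentiable (by simp)) _)]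
      rw [pd_swap hR3s ((1:ℝ),((0:ℝ),(0:ℝ))) ((0:ℝ),((1:ℝ),(0:ℝ))) (0,(a,b))]
      rw [hD1D2G (0,(a,b))]
      rw [hD2G0 (a,b)]
      rw [hR30 (a,b)]
      rw [← pd_slice0 (((pd_contDiff hR3s ((1:ℝ),((0:ℝ),(0:ℝ)))).differentiable (by simp))
        (0,(a,b))) ((1:ℝ),(0:ℝ))]
      norm_num
      ring
    obtain ⟨Aq, hAqs, hAqEv, hAqBB⟩ := KEY q p hq Q0 hPfuQ Phi hPhis hBoxp
    obtain ⟨Bp, hBps, hBpEv, hBpBB⟩ := KEY p q hp P0 hPfuP Psi hPsis hBoxq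
    beta_reduce
    rw [hAqBB x y, hBpBB x y, hux x y]
    have hPfp_fun : ∀ b : ℝ, (fun s => Pf p u s b) = P0 := fun b => funext fun s => hPfuP s b
    have hPfq_fun : ∀ b : ℝ, (fun s => Pf q u s b) = Q0 := fun b => funext fun s => hPfuQ s b
    rw [hPfp_fun y, hPfq_fun y, hPfuP x y, hPfuQ x y, hAqEv x y, hBpEv x y]
    have hArg : (fun s => deriv P0 s * Pf q u s y - Pf p u s y * deriv Q0 s
          + Ev (Box p) (Pf q) u s y - Ev (Box q) (Pf p) u s y)
        = fun s => deriv P0 s * Q0 s - P0 s * deriv Q0 s + Aq (s,y) - Bp (s,y) := by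
      funext s
      rw [hPfuP s y, hPfuQ s y, hAqEv s y, hBpEv s y]
    rw [hArg]
    have hDarg : deriv (fun s => deriv P0 s * Q0 s - P0 s * deriv Q0 s
          + Aq (s,y) - Bp (s,y)) x
        = deriv (deriv P0) x * Q0 x + deriv P0 x * deriv Q0 x
          - (deriv P0 x * deriv Q0 x + P0 x * deriv (deriv Q0) x)
          + pd ((1:ℝ),(0:ℝ)) Aq (x,y) - pd ((1:ℝ),(0:ℝ)) Bp (x,y) := by
      have h1 : HasDerivAt (deriv P0) (deriv (deriv P0) x) x :=
        ((hdP0s.differentiable (by simp)) x).hasDerivAt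
      have h2 : HasDerivAt Q0 (deriv Q0 x) x := ((hQ0s.differentiable (by simp)) x).hasDerivAt
      have h3 : HasDerivAt P0 (deriv P0 x) x := ((hP0s.differentiable (by simp)) x).hasDerivAt
      have h4 : HasDerivAt (deriv Q0) (deriv (deriv Q0) x) x :=
        ((hdQ0s.differentiable (by simp)) x).hasDerivAt
      have h5 : HasDerivAt (fun s => Aq (s,y)) (pd ((1:ℝ),(0:ℝ)) Aq (x,y)) x :=
        sliceX ((hAqs.differentiable (by simp)) (x,y))
      have h6 : HasDerivAt (fun s => Bp (s,y)) (pd ((1:ℝ),(0:ℝ)) Bp (x,y)) x :=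
        sliceX ((hBps.differentiable (by simp)) (x,y))
      exact ((((h1.mul h2).sub (h3.mul h4)).add h5).sub h6).deriv
    rw [hDarg]
    have e1 : pd ((1:ℝ),(0:ℝ)) Phi (x,y)
        = pd ((1:ℝ),(0:ℝ)) (pd ((1:ℝ),(0:ℝ)) F) (x,y) * P0 x
          + pd ((1:ℝ),(0:ℝ)) F (x,y) * deriv P0 x + (1/2) * deriv (deriv P0) x := by
      rw [hPhidef]
      exact hDxDir P0 hP0s hdP0s x y
    have e2 : pd ((1:ℝ),(0:ℝ)) Psi (x,y)
        = pd ((1:ℝ),(0:ℝ)) (pd ((1:ℝ),(0:ℝ)) F) (x,y) * Q0 x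
          + pd ((1:ℝ),(0:ℝ)) F (x,y) * deriv Q0 x + (1/2) * deriv (deriv Q0) x := by
      rw [hPsidef]
      exact hDxDir Q0 hQ0s hdQ0s x y
    rw [e1, e2]
    ring
end
end

section
/- Consider the system A_{xy} = -(1/8)Ae^{-B/4}, B_{xy} = (1/2)e^{-B/4} and the operator □ = [[-(1/4)B_x + D_x, (1/2)A_x],[0, (1/2)B_x − 2D_x]] acting on pairs (φ₁(x,[w₁,w₂]), φ₂(x,[w₁,w₂])), where w₁ = -(1/4)a² − a_x, w₂ = ab + 2b_x, a = B_x/2, b = A_x/2. Then the bracket induced on the domain of □ by commutation of the symmetries □(ψ), □(χ) has bilinear part {{ψ,χ}}_□ = (1/2)·( ψ²_xχ¹ − ψ¹χ²_x + ψ¹_xχ² − ψ²χ¹_x , ψ²_xχ² − ψ²χ²_x )ᵗ. -/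
open scoped ContDiff

namespace S19

local notation "∞'" => ((⊤ : ℕ∞) : WithTop ℕ∞)

lemma cd_deriv {f : ℝ → ℝ} (hf : ContDiff ℝ ∞' f) : ContDiff ℝ ∞' (deriv f) :=
  (contDiff_infty_iff_deriv.1 hf).2

lemma cd_iter (n : ℕ) {f : ℝ → ℝ} (hf : ContDiff ℝ ∞' f) :
    ContDiff ℝ ∞' (iteratedDeriv n f) := by
  induction n generalizing f with
  | zero => simpa [iteratedDeriv_zero] using hf
  | succ n ih => rw [iteratedDeriv_succ']; exact ih (cd_deriv hf)

lemma iter_add {f g : ℝ → ℝ} (hf : ContDiff ℝ ∞' f) (hg : ContDiff ℝ ∞' g) (n : ℕ) (x : ℝ) :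
    iteratedDeriv n (fun r => f r + g r) x = iteratedDeriv n f x + iteratedDeriv n g x := by
  simp only [← iteratedDerivWithin_univ]
  exact iteratedDerivWithin_add (Set.mem_univ x) uniqueDiffOn_univ
    ((hf.of_le (m := n) (mod_cast le_top)).contDiffWithinAt) ((hg.of_le (m := n) (mod_cast le_top)).contDiffWithinAt)

lemma iter_cmul (c : ℝ) {f : ℝ → ℝ} (hf : ContDiff ℝ ∞' f) (n : ℕ) (x : ℝ) :
    iteratedDeriv n (fun r => c * f r) x = c * iteratedDeriv n f x := by
  simp only [← iteratedDerivWithin_univ]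
  exact iteratedDerivWithin_const_mul (Set.mem_univ x) uniqueDiffOn_univ c
    ((hf.of_le (m := n) (mod_cast le_top)).contDiffWithinAt)

end S19

namespace S19X
open S19

local notation "∞'" => ((⊤ : ℕ∞) : WithTop ℕ∞)

lemma le_inf : ∞' ≠ 0 := by simp

variable {H : ℝ × ℝ → ℝ}

lemma hasDerivAt_slice1 {t₀ x : ℝ} (hH : DifferentiableAt ℝ H (t₀, x)) :
    HasDerivAt (fun t => H (t, x)) (fderiv ℝ H (t₀, x) (1, 0)) t₀ :=
  hH.hasFDerivAt.comp_hasDerivAt t₀ ((hasDerivAt_id t₀).prodMk (hasDerivAt_const t₀ x))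

lemma hasDerivAt_slice2 {t x₀ : ℝ} (hH : DifferentiableAt ℝ H (t, x₀)) :
    HasDerivAt (fun r => H (t, r)) (fderiv ℝ H (t, x₀) (0, 1)) x₀ :=
  hH.hasFDerivAt.comp_hasDerivAt x₀ ((hasDerivAt_const x₀ t).prodMk (hasDerivAt_id x₀))

lemma deriv_slice1 {t₀ x : ℝ} (hH : DifferentiableAt ℝ H (t₀, x)) :
    deriv (fun t => H (t, x)) t₀ = fderiv ℝ H (t₀, x) (1, 0) := (hasDerivAt_slice1 hH).deriv

lemma deriv_slice2 {t x₀ : ℝ} (hH : DifferentiableAt ℝ H (t, x₀)) :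
    deriv (fun r => H (t, r)) x₀ = fderiv ℝ H (t, x₀) (0, 1) := (hasDerivAt_slice2 hH).deriv

lemma cd_pd (hH : ContDiff ℝ ∞' H) (v : ℝ × ℝ) :
    ContDiff ℝ ∞' (fun p => fderiv ℝ H p v) :=
  (hH.fderiv_right (by simp)).clm_apply contDiff_const

lemma fderiv_pd (hH : ContDiff ℝ ∞' H) (q : ℝ × ℝ) (v w : ℝ × ℝ) :
    fderiv ℝ (fun p => fderiv ℝ H p v) q w = fderiv ℝ (fderiv ℝ H) q w v := by
  have hdd : DifferentiableAt ℝ (fderiv ℝ H) q :=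
    ((hH.fderiv_right (m := ∞') (by simp)).differentiable le_inf q)
  rw [fderiv_clm_apply hdd (differentiableAt_const v)]
  simp

lemma mixed (hH : ContDiff ℝ ∞' H) (t₀ x₀ : ℝ) :
    deriv (fun t => deriv (fun r => H (t, r)) x₀) t₀
      = deriv (fun r => deriv (fun t => H (t, r)) t₀) x₀ := by
  have hd : Differentiable ℝ H := hH.differentiable le_inf
  have e1 : (fun t => deriv (fun r => H (t, r)) x₀) = fun t => fderiv ℝ H (t, x₀) (0, 1) :=
    funext fun t => deriv_slice2 (hd _)
  have e2 : (fun r => deriv (fun t => H (t, r)) t₀) = fun r => fderiv ℝ H (t₀, r) (1, 0) :=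
    funext fun r => deriv_slice1 (hd _)
  rw [e1, e2]
  have d1 : DifferentiableAt ℝ (fun p => fderiv ℝ H p (0, 1)) (t₀, x₀) :=
    ((cd_pd hH _).differentiable le_inf (t₀, x₀))
  have d2 : DifferentiableAt ℝ (fun p => fderiv ℝ H p (1, 0)) (t₀, x₀) :=
    ((cd_pd hH _).differentiable le_inf (t₀, x₀))
  rw [deriv_slice1 (H := fun p => fderiv ℝ H p (0,1)) d1,
      deriv_slice2 (H := fun p => fderiv ℝ H p (1,0)) d2,
      fderiv_pd hH _ _ _, fderiv_pd hH _ _ _]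
  exact (hH.contDiffAt.isSymmSndFDerivAt (by rw [minSmoothness_of_isRCLikeNormedField]; exact WithTop.coe_le_coe.mpr (le_top : (2 : ℕ∞) ≤ ⊤))) _ _

lemma diff_slice1 (hH : ContDiff ℝ ∞' H) (t z : ℝ) :
    DifferentiableAt ℝ (fun t' => H (t', z)) t :=
  (hasDerivAt_slice1 ((hH.differentiable le_inf) (t, z))).differentiableAt

lemma cd_partial1_at0 (hH : ContDiff ℝ ∞' H) :
    ContDiff ℝ ∞' (fun x => deriv (fun t => H (t, x)) 0) := by
  have hd : Differentiable ℝ H := hH.differentiable le_inf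
  have e : (fun x => deriv (fun t => H (t, x)) 0) = fun x => fderiv ℝ H (0, x) (1, 0) :=
    funext fun x => deriv_slice1 (hd _)
  rw [e]
  exact (cd_pd hH _).comp (contDiff_const.prodMk contDiff_id)

end S19X

namespace S19Y
open S19 S19X

local notation "∞'" => ((⊤ : ℕ∞) : WithTop ℕ∞)

/-- value of W1 on a section whose relevant slice is `v` -/
noncomputable def Pv (v : ℝ → ℝ) : ℝ → ℝ :=
  fun z => -(1/4) * ((1/2) * deriv v z) ^ 2 - deriv (fun r' => (1/2) * deriv v r') z

/-- value of W2 on a section with slices `u` (first) and `v` (second) -/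
noncomputable def Qv (u v : ℝ → ℝ) : ℝ → ℝ :=
  fun z => ((1/2) * deriv v z) * ((1/2) * deriv u z) + 2 * deriv (fun r' => (1/2) * deriv u r') z

noncomputable def Jets (N : ℕ) (h : ℝ → ℝ) (z : ℝ) : Fin N → ℝ := fun n => iteratedDeriv (n : ℕ) h z

lemma Pv_eq {v : ℝ → ℝ} (hv : ContDiff ℝ ∞' v) :
    Pv v = fun z => -(1/16) * deriv v z ^ 2 - (1/2) * deriv (deriv v) z := by
  funext z
  have h : (fun r' => (1/2) * deriv v r') = fun r' => (1/2) * deriv v r' := rfl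
  rw [Pv]
  rw [deriv_const_mul _ (((cd_deriv hv).differentiable le_inf) z)]
  ring

lemma Qv_eq {u v : ℝ → ℝ} (hu : ContDiff ℝ ∞' u) (hv : ContDiff ℝ ∞' v) :
    Qv u v = fun z => (1/4) * (deriv v z * deriv u z) + deriv (deriv u) z := by
  funext z
  rw [Qv, deriv_const_mul _ (((cd_deriv hu).differentiable le_inf) z)]
  ring

lemma cd_Pv {v : ℝ → ℝ} (hv : ContDiff ℝ ∞' v) : ContDiff ℝ ∞' (Pv v) := by
  rw [Pv_eq hv]
  exact ((contDiff_const.mul ((cd_deriv hv).pow 2)).sub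
    (contDiff_const.mul (cd_deriv (cd_deriv hv))))

lemma cd_Qv {u v : ℝ → ℝ} (hu : ContDiff ℝ ∞' u) (hv : ContDiff ℝ ∞' v) :
    ContDiff ℝ ∞' (Qv u v) := by
  rw [Qv_eq hu hv]
  exact (contDiff_const.mul ((cd_deriv hv).mul (cd_deriv hu))).add (cd_deriv (cd_deriv hu))

lemma cd_Jets {N : ℕ} {h : ℝ → ℝ} (hh : ContDiff ℝ ∞' h) :
    ContDiff ℝ ∞' (Jets N h) := contDiff_pi.2 fun n => cd_iter _ hh

/-- derivative of an affine perturbation -/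
lemma deriv_affine {f g : ℝ → ℝ} (hf : ContDiff ℝ ∞' f) (hg : ContDiff ℝ ∞' g) (t z : ℝ) :
    deriv (fun r => f r + t * g r) z = deriv f z + t * deriv g z := by
  rw [deriv_fun_add ((hf.differentiable le_inf) z)
      (((contDiff_const.mul hg).differentiable le_inf) z),
    deriv_const_mul _ ((hg.differentiable le_inf) z)]

lemma cd_affine {f g : ℝ → ℝ} (hf : ContDiff ℝ ∞' f) (hg : ContDiff ℝ ∞' g) (t : ℝ) :
    ContDiff ℝ ∞' (fun r => f r + t * g r) := hf.add (contDiff_const.mul hg)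

lemma deriv_deriv_affine {f g : ℝ → ℝ} (hf : ContDiff ℝ ∞' f) (hg : ContDiff ℝ ∞' g) (t z : ℝ) :
    deriv (deriv (fun r => f r + t * g r)) z = deriv (deriv f) z + t * deriv (deriv g) z := by
  have e : deriv (fun r => f r + t * g r) = fun r => deriv f r + t * deriv g r :=
    funext fun z => deriv_affine hf hg t z
  rw [e, deriv_affine (cd_deriv hf) (cd_deriv hg) t z]

noncomputable def P0 (f : ℝ → ℝ) : ℝ → ℝ := fun z => -(1/16) * deriv f z ^ 2 - (1/2) * deriv (deriv f) z
noncomputable def P1 (f g : ℝ → ℝ) : ℝ → ℝ :=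
  fun z => -(1/8) * (deriv f z * deriv g z) - (1/2) * deriv (deriv g) z
noncomputable def P2 (g : ℝ → ℝ) : ℝ → ℝ := fun z => -(1/16) * deriv g z ^ 2

noncomputable def Q0 (f₁ f₂ : ℝ → ℝ) : ℝ → ℝ := fun z => (1/4) * (deriv f₂ z * deriv f₁ z) + deriv (deriv f₁) z
noncomputable def Q1 (f₁ f₂ g₁ g₂ : ℝ → ℝ) : ℝ → ℝ :=
  fun z => (1/4) * (deriv f₂ z * deriv g₁ z + deriv g₂ z * deriv f₁ z) + deriv (deriv g₁) z
noncomputable def Q2 (g₁ g₂ : ℝ → ℝ) : ℝ → ℝ := fun z => (1/4) * (deriv g₂ z * deriv g₁ z)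

lemma cd_P0 {f : ℝ → ℝ} (hf : ContDiff ℝ ∞' f) : ContDiff ℝ ∞' (P0 f) :=
  (contDiff_const.mul ((cd_deriv hf).pow 2)).sub (contDiff_const.mul (cd_deriv (cd_deriv hf)))
lemma cd_P1 {f g : ℝ → ℝ} (hf : ContDiff ℝ ∞' f) (hg : ContDiff ℝ ∞' g) :
    ContDiff ℝ ∞' (P1 f g) :=
  (contDiff_const.mul ((cd_deriv hf).mul (cd_deriv hg))).sub
    (contDiff_const.mul (cd_deriv (cd_deriv hg)))
lemma cd_P2 {g : ℝ → ℝ} (hg : ContDiff ℝ ∞' g) : ContDiff ℝ ∞' (P2 g) :=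
  contDiff_const.mul ((cd_deriv hg).pow 2)
lemma cd_Q0 {f₁ f₂ : ℝ → ℝ} (h1 : ContDiff ℝ ∞' f₁) (h2 : ContDiff ℝ ∞' f₂) :
    ContDiff ℝ ∞' (Q0 f₁ f₂) :=
  (contDiff_const.mul ((cd_deriv h2).mul (cd_deriv h1))).add (cd_deriv (cd_deriv h1))
lemma cd_Q1 {f₁ f₂ g₁ g₂ : ℝ → ℝ} (h1 : ContDiff ℝ ∞' f₁) (h2 : ContDiff ℝ ∞' f₂)
    (h3 : ContDiff ℝ ∞' g₁) (h4 : ContDiff ℝ ∞' g₂) : ContDiff ℝ ∞' (Q1 f₁ f₂ g₁ g₂) :=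
  (contDiff_const.mul (((cd_deriv h2).mul (cd_deriv h3)).add
    ((cd_deriv h4).mul (cd_deriv h1)))).add (cd_deriv (cd_deriv h3))
lemma cd_Q2 {g₁ g₂ : ℝ → ℝ} (h3 : ContDiff ℝ ∞' g₁) (h4 : ContDiff ℝ ∞' g₂) :
    ContDiff ℝ ∞' (Q2 g₁ g₂) := contDiff_const.mul ((cd_deriv h4).mul (cd_deriv h3))

lemma Pv_expand {f g : ℝ → ℝ} (hf : ContDiff ℝ ∞' f) (hg : ContDiff ℝ ∞' g) (t z : ℝ) :
    Pv (fun r => f r + t * g r) z = P0 f z + t * P1 f g z + t ^ 2 * P2 g z := by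
  rw [Pv_eq (cd_affine hf hg t)]
  simp only [deriv_affine hf hg t, deriv_deriv_affine hf hg t]
  simp only [P0, P1, P2]
  ring

lemma Qv_expand {f₁ f₂ g₁ g₂ : ℝ → ℝ} (h1 : ContDiff ℝ ∞' f₁) (h2 : ContDiff ℝ ∞' f₂)
    (h3 : ContDiff ℝ ∞' g₁) (h4 : ContDiff ℝ ∞' g₂) (t z : ℝ) :
    Qv (fun r => f₁ r + t * g₁ r) (fun r => f₂ r + t * g₂ r) z
      = Q0 f₁ f₂ z + t * Q1 f₁ f₂ g₁ g₂ z + t ^ 2 * Q2 g₁ g₂ z := by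
  rw [Qv_eq (cd_affine h1 h3 t) (cd_affine h2 h4 t)]
  simp only [deriv_affine h1 h3 t, deriv_affine h2 h4 t, deriv_deriv_affine h1 h3 t]
  simp only [Q0, Q1, Q2]
  ring

lemma iter_comb {p q r : ℝ → ℝ} (hp : ContDiff ℝ ∞' p) (hq : ContDiff ℝ ∞' q)
    (hr : ContDiff ℝ ∞' r) (t c : ℝ) (n : ℕ) (z : ℝ) :
    iteratedDeriv n (fun w => p w + t * q w + c * r w) z
      = iteratedDeriv n p z + t * iteratedDeriv n q z + c * iteratedDeriv n r z := by
  have e : (fun w => p w + t * q w + c * r w)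
      = fun w => (fun w' => p w' + t * q w') w + (fun w' => c * r w') w := rfl
  rw [e, iter_add (hp.add (contDiff_const.mul hq)) (contDiff_const.mul hr),
    iter_add hp (contDiff_const.mul hq), iter_cmul t hq, iter_cmul c hr]

lemma Jets_comb {N : ℕ} {p q r : ℝ → ℝ} (hp : ContDiff ℝ ∞' p) (hq : ContDiff ℝ ∞' q)
    (hr : ContDiff ℝ ∞' r) (t c : ℝ) (z : ℝ) :
    Jets N (fun w => p w + t * q w + c * r w) z
      = fun n => Jets N p z n + t * Jets N q z n + c * Jets N r z n := by
  funext n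
  exact iter_comb hp hq hr t c (n : ℕ) z

end S19Y

namespace S19Y
open S19 S19X

local notation "∞'" => ((⊤ : ℕ∞) : WithTop ℕ∞)

lemma cd_CC {N : ℕ} {θ : ℝ → (Fin N → ℝ) → (Fin N → ℝ) → ℝ}
    (hθ : ContDiff ℝ ∞' (fun z : ℝ × (Fin N → ℝ) × (Fin N → ℝ) => θ z.1 z.2.1 z.2.2))
    {u v : ℝ → ℝ} (hu : ContDiff ℝ ∞' u) (hv : ContDiff ℝ ∞' v) :
    ContDiff ℝ ∞' (fun z => θ z (Jets N (Pv v) z) (Jets N (Qv u v) z)) :=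
  hθ.comp (contDiff_id.prodMk ((cd_Jets (cd_Pv hv)).prodMk (cd_Jets (cd_Qv hu hv))))

/-- The joint function `(t, z) ↦ θ z (jets of Pv(f₂+t·g₂)) (jets of Qv(f₁+t·g₁, f₂+t·g₂))`
is jointly smooth. -/
lemma master {N : ℕ} {θ : ℝ → (Fin N → ℝ) → (Fin N → ℝ) → ℝ}
    (hθ : ContDiff ℝ ∞' (fun z : ℝ × (Fin N → ℝ) × (Fin N → ℝ) => θ z.1 z.2.1 z.2.2))
    {f₁ f₂ g₁ g₂ : ℝ → ℝ} (h1 : ContDiff ℝ ∞' f₁) (h2 : ContDiff ℝ ∞' f₂)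
    (h3 : ContDiff ℝ ∞' g₁) (h4 : ContDiff ℝ ∞' g₂) :
    ∃ G : ℝ × ℝ → ℝ, ContDiff ℝ ∞' G ∧
      ∀ t z, G (t, z) = θ z (Jets N (Pv (fun r => f₂ r + t * g₂ r)) z)
        (Jets N (Qv (fun r => f₁ r + t * g₁ r) (fun r => f₂ r + t * g₂ r)) z) := by
  refine ⟨fun p => θ p.2
      (fun n => Jets N (P0 f₂) p.2 n + p.1 * Jets N (P1 f₂ g₂) p.2 n
        + p.1 ^ 2 * Jets N (P2 g₂) p.2 n)
      (fun n => Jets N (Q0 f₁ f₂) p.2 n + p.1 * Jets N (Q1 f₁ f₂ g₁ g₂) p.2 n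
        + p.1 ^ 2 * Jets N (Q2 g₁ g₂) p.2 n), ?_, ?_⟩
  · have hv1 : ContDiff ℝ ∞' (fun p : ℝ × ℝ => (fun n : Fin N =>
        Jets N (P0 f₂) p.2 n + p.1 * Jets N (P1 f₂ g₂) p.2 n
          + p.1 ^ 2 * Jets N (P2 g₂) p.2 n)) := by
      refine contDiff_pi.2 fun n => ?_
      have j0 := (cd_iter (n : ℕ) (cd_P0 h2)).comp (contDiff_snd (E := ℝ) (F := ℝ))
      have j1 := (cd_iter (n : ℕ) (cd_P1 h2 h4)).comp (contDiff_snd (E := ℝ) (F := ℝ))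
      have j2 := (cd_iter (n : ℕ) (cd_P2 h4)).comp (contDiff_snd (E := ℝ) (F := ℝ))
      exact (j0.add (contDiff_fst.mul j1)).add ((contDiff_fst.pow 2).mul j2)
    have hv2 : ContDiff ℝ ∞' (fun p : ℝ × ℝ => (fun n : Fin N =>
        Jets N (Q0 f₁ f₂) p.2 n + p.1 * Jets N (Q1 f₁ f₂ g₁ g₂) p.2 n
          + p.1 ^ 2 * Jets N (Q2 g₁ g₂) p.2 n)) := by
      refine contDiff_pi.2 fun n => ?_
      have j0 := (cd_iter (n : ℕ) (cd_Q0 h1 h2)).comp (contDiff_snd (E := ℝ) (F := ℝ))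
      have j1 := (cd_iter (n : ℕ) (cd_Q1 h1 h2 h3 h4)).comp (contDiff_snd (E := ℝ) (F := ℝ))
      have j2 := (cd_iter (n : ℕ) (cd_Q2 h3 h4)).comp (contDiff_snd (E := ℝ) (F := ℝ))
      exact (j0.add (contDiff_fst.mul j1)).add ((contDiff_fst.pow 2).mul j2)
    exact hθ.comp (contDiff_snd.prodMk (hv1.prodMk hv2))
  · intro t z
    have eP : Pv (fun r => f₂ r + t * g₂ r)
        = fun w => P0 f₂ w + t * P1 f₂ g₂ w + t ^ 2 * P2 g₂ w :=
      funext fun w => Pv_expand h2 h4 t w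
    have eQ : Qv (fun r => f₁ r + t * g₁ r) (fun r => f₂ r + t * g₂ r)
        = fun w => Q0 f₁ f₂ w + t * Q1 f₁ f₂ g₁ g₂ w + t ^ 2 * Q2 g₁ g₂ w :=
      funext fun w => Qv_expand h1 h2 h3 h4 t w
    rw [eP, eQ, Jets_comb (cd_P0 h2) (cd_P1 h2 h4) (cd_P2 h4),
      Jets_comb (cd_Q0 h1 h2) (cd_Q1 h1 h2 h3 h4) (cd_Q2 h3 h4)]

end S19Y



open S19 S19X S19Y

local notation "∞'" => ((⊤ : ℕ∞) : WithTop ℕ∞)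

/-- For the Liouville-type system `A_{xy} = -(1/8)A e^{-B/4}`,
`B_{xy} = (1/2)e^{-B/4}`, with momenta `a = B_x/2`, `b = A_x/2` and integrals
`w₁ = -(1/4)a² − a_x`, `w₂ = ab + 2b_x`, the operator
`□ = [[-(1/4)B_x + Dₓ, (1/2)A_x],[0, (1/2)B_x − 2Dₓ]]` produces symmetries
`□(ψ)` from pairs of differential functions `ψ(x,[w₁,w₂])`, and the bracket
induced on its domain by the commutation
`[□(ψ), □(χ)] = □(Ev_{□(ψ)}(χ) − Ev_{□(χ)}(ψ) + {{ψ,χ}}_□)` has bilinear part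
`{{ψ,χ}}_□ = (1/2)·(ψ²ₓχ¹ − ψ¹χ²ₓ + ψ¹ₓχ² − ψ²χ¹ₓ , ψ²ₓχ² − ψ²χ²ₓ)ᵗ`. -/
theorem stmt_19 (N : ℕ)
    (s₀ : (ℝ → ℝ → ℝ) × (ℝ → ℝ → ℝ))
    (hA : ContDiff ℝ (⊤ : ℕ∞) (Function.uncurry s₀.1))
    (hB : ContDiff ℝ (⊤ : ℕ∞) (Function.uncurry s₀.2))
    (hsolA : ∀ x y : ℝ, deriv (fun t => deriv (fun r => s₀.1 r t) x) y
      = -(1/8) * s₀.1 x y * Real.exp (-(s₀.2 x y) / 4))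
    (hsolB : ∀ x y : ℝ, deriv (fun t => deriv (fun r => s₀.2 r t) x) y
      = (1/2) * Real.exp (-(s₀.2 x y) / 4))
    (ψ χ : Fin 2 → ℝ → (Fin N → ℝ) → (Fin N → ℝ) → ℝ)
    (hψ : ∀ i, ContDiff ℝ (⊤ : ℕ∞) (fun z : ℝ × (Fin N → ℝ) × (Fin N → ℝ) => ψ i z.1 z.2.1 z.2.2))
    (hχ : ∀ i, ContDiff ℝ (⊤ : ℕ∞) (fun z : ℝ × (Fin N → ℝ) × (Fin N → ℝ) => χ i z.1 z.2.1 z.2.2))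
    -- the integrals w₁[s], w₂[s] of an arbitrary pair of fields s = (A, B)
    (W1 W2 : (ℝ → ℝ → ℝ) × (ℝ → ℝ → ℝ) → ℝ → ℝ → ℝ)
    (hW1 : ∀ (s : (ℝ → ℝ → ℝ) × (ℝ → ℝ → ℝ)) (x y : ℝ), W1 s x y =
      -(1/4) * ((1/2) * deriv (fun r => s.2 r y) x) ^ 2
        - deriv (fun r => (1/2) * deriv (fun r' => s.2 r' y) r) x)
    (hW2 : ∀ (s : (ℝ → ℝ → ℝ) × (ℝ → ℝ → ℝ)) (x y : ℝ), W2 s x y =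
      ((1/2) * deriv (fun r => s.2 r y) x) * ((1/2) * deriv (fun r => s.1 r y) x)
        + 2 * deriv (fun r => (1/2) * deriv (fun r' => s.1 r' y) r) x)
    -- composition of a component of a differential function with the jets of w₁, w₂
    (C : (Fin 2 → ℝ → (Fin N → ℝ) → (Fin N → ℝ) → ℝ) → Fin 2 →
      (ℝ → ℝ → ℝ) × (ℝ → ℝ → ℝ) → ℝ → ℝ → ℝ)
    (hC : ∀ (r : Fin 2 → ℝ → (Fin N → ℝ) → (Fin N → ℝ) → ℝ) (i : Fin 2)
        (s : (ℝ → ℝ → ℝ) × (ℝ → ℝ → ℝ)) (x y : ℝ),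
      C r i s x y = r i x (fun n => iteratedDeriv (n : ℕ) (fun r' => W1 s r' y) x)
        (fun n => iteratedDeriv (n : ℕ) (fun r' => W2 s r' y) x))
    -- the operator □ applied to a differential-function pair r, on the section s
    (Bx : (Fin 2 → ℝ → (Fin N → ℝ) → (Fin N → ℝ) → ℝ) →
      (ℝ → ℝ → ℝ) × (ℝ → ℝ → ℝ) → ℝ → ℝ → ℝ × ℝ)
    (hBx : ∀ (r : Fin 2 → ℝ → (Fin N → ℝ) → (Fin N → ℝ) → ℝ)
        (s : (ℝ → ℝ → ℝ) × (ℝ → ℝ → ℝ)) (x y : ℝ),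
      Bx r s x y =
        (-(1/4) * deriv (fun r' => s.2 r' y) x * C r 0 s x y
            + deriv (fun r' => C r 0 s r' y) x
            + (1/2) * deriv (fun r' => s.1 r' y) x * C r 1 s x y,
         (1/2) * deriv (fun r' => s.2 r' y) x * C r 1 s x y
            - 2 * deriv (fun r' => C r 1 s r' y) x))
    -- evolutionary (Gateaux) derivative of a functional F in a pair direction Φ
    (Ev : ((ℝ → ℝ → ℝ) × (ℝ → ℝ → ℝ) → ℝ → ℝ → ℝ × ℝ) →
      ((ℝ → ℝ → ℝ) × (ℝ → ℝ → ℝ) → ℝ → ℝ → ℝ) →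
      (ℝ → ℝ → ℝ) × (ℝ → ℝ → ℝ) → ℝ → ℝ → ℝ)
    (hEv : ∀ (Φ : (ℝ → ℝ → ℝ) × (ℝ → ℝ → ℝ) → ℝ → ℝ → ℝ × ℝ)
        (F : (ℝ → ℝ → ℝ) × (ℝ → ℝ → ℝ) → ℝ → ℝ → ℝ)
        (s : (ℝ → ℝ → ℝ) × (ℝ → ℝ → ℝ)) (x y : ℝ),
      Ev Φ F s x y = deriv (fun t : ℝ =>
        F (fun a b => s.1 a b + t * (Φ s a b).1, fun a b => s.2 a b + t * (Φ s a b).2)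
          x y) 0) :
    -- the commutator of the symmetries □(ψ), □(χ) equals □ applied to
    -- Ev_{□(ψ)}(χ) − Ev_{□(χ)}(ψ) + {{ψ,χ}}_□ with the stated bilinear part
    ∀ x y : ℝ,
      (Ev (Bx ψ) (fun s a b => (Bx χ s a b).1) s₀ x y
          - Ev (Bx χ) (fun s a b => (Bx ψ s a b).1) s₀ x y,
       Ev (Bx ψ) (fun s a b => (Bx χ s a b).2) s₀ x y
          - Ev (Bx χ) (fun s a b => (Bx ψ s a b).2) s₀ x y)
      = (fun Arg : ℝ → ℝ → ℝ × ℝ =>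
          (-(1/4) * deriv (fun r' => s₀.2 r' y) x * (Arg x y).1
              + deriv (fun r' => (Arg r' y).1) x
              + (1/2) * deriv (fun r' => s₀.1 r' y) x * (Arg x y).2,
           (1/2) * deriv (fun r' => s₀.2 r' y) x * (Arg x y).2
              - 2 * deriv (fun r' => (Arg r' y).2) x))
        (fun a b =>
          (Ev (Bx ψ) (C χ 0) s₀ a b - Ev (Bx χ) (C ψ 0) s₀ a b
              + (1/2) * (deriv (fun r' => C ψ 1 s₀ r' b) a * C χ 0 s₀ a b
                  - C ψ 0 s₀ a b * deriv (fun r' => C χ 1 s₀ r' b) a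
                  + deriv (fun r' => C ψ 0 s₀ r' b) a * C χ 1 s₀ a b
                  - C ψ 1 s₀ a b * deriv (fun r' => C χ 0 s₀ r' b) a),
           Ev (Bx ψ) (C χ 1) s₀ a b - Ev (Bx χ) (C ψ 1) s₀ a b
              + (1/2) * (deriv (fun r' => C ψ 1 s₀ r' b) a * C χ 1 s₀ a b
                  - C ψ 1 s₀ a b * deriv (fun r' => C χ 1 s₀ r' b) a))) := by
  intro x y
  -- named slice functions of the background solution
  obtain ⟨f₁, hf₁d⟩ : ∃ F : ℝ → ℝ, ∀ a, F a = s₀.1 a y := ⟨_, fun _ => rfl⟩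
  obtain ⟨f₂, hf₂d⟩ : ∃ F : ℝ → ℝ, ∀ a, F a = s₀.2 a y := ⟨_, fun _ => rfl⟩
  have hsf₁ : (fun a => s₀.1 a y) = f₁ := funext fun a => (hf₁d a).symm
  have hsf₂ : (fun a => s₀.2 a y) = f₂ := funext fun a => (hf₂d a).symm
  have hf₁cd : ContDiff ℝ ∞' f₁ := by
    rw [show f₁ = fun a => s₀.1 a y from funext hf₁d]
    exact (hA.of_le (by simp)).comp (contDiff_id.prodMk contDiff_const)
  have hf₂cd : ContDiff ℝ ∞' f₂ := by
    rw [show f₂ = fun a => s₀.2 a y from funext hf₂d]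
    exact (hB.of_le (by simp)).comp (contDiff_id.prodMk contDiff_const)
  -- `C` on a section expressed through its slices
  have hCval : ∀ (r : Fin 2 → ℝ → (Fin N → ℝ) → (Fin N → ℝ) → ℝ)
      (s : (ℝ → ℝ → ℝ) × (ℝ → ℝ → ℝ)) (u v : ℝ → ℝ),
      (fun a => s.1 a y) = u → (fun a => s.2 a y) = v →
      ∀ (i : Fin 2) (z : ℝ),
        C r i s z y = r i z (Jets N (Pv v) z) (Jets N (Qv u v) z) := by
    intro r s u v h1 h2 i z
    rw [hC]
    have e1 : (fun r' => W1 s r' y) = Pv v := by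
      funext w
      rw [hW1]
      simp only [h2]
      rfl
    have e2 : (fun r' => W2 s r' y) = Qv u v := by
      funext w
      rw [hW2]
      simp only [h1, h2]
      rfl
    simp only [e1, e2]
    rfl
  -- the composed differential functions on the background
  obtain ⟨Aψ, hAψd⟩ : ∃ F : Fin 2 → ℝ → ℝ,
      ∀ i z, F i z = ψ i z (Jets N (Pv f₂) z) (Jets N (Qv f₁ f₂) z) := ⟨_, fun _ _ => rfl⟩
  obtain ⟨Aχ, hAχd⟩ : ∃ F : Fin 2 → ℝ → ℝ,
      ∀ i z, F i z = χ i z (Jets N (Pv f₂) z) (Jets N (Qv f₁ f₂) z) := ⟨_, fun _ _ => rfl⟩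
  have hAψcd : ∀ i, ContDiff ℝ ∞' (Aψ i) := by
    intro i
    rw [show Aψ i = fun z => ψ i z (Jets N (Pv f₂) z) (Jets N (Qv f₁ f₂) z) from
      funext (hAψd i)]
    exact cd_CC ((hψ i).of_le (by simp)) hf₁cd hf₂cd
  have hAχcd : ∀ i, ContDiff ℝ ∞' (Aχ i) := by
    intro i
    rw [show Aχ i = fun z => χ i z (Jets N (Pv f₂) z) (Jets N (Qv f₁ f₂) z) from
      funext (hAχd i)]
    exact cd_CC ((hχ i).of_le (by simp)) hf₁cd hf₂cd
  have hCψ : ∀ (i : Fin 2) (z : ℝ), C ψ i s₀ z y = Aψ i z := fun i z => by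
    rw [hCval ψ s₀ f₁ f₂ hsf₁ hsf₂ i z, hAψd]
  have hCχ : ∀ (i : Fin 2) (z : ℝ), C χ i s₀ z y = Aχ i z := fun i z => by
    rw [hCval χ s₀ f₁ f₂ hsf₁ hsf₂ i z, hAχd]
  -- the perturbations (the two symmetries)
  obtain ⟨gψ1, hgψ1d⟩ : ∃ F : ℝ → ℝ, ∀ a, F a = (Bx ψ s₀ a y).1 := ⟨_, fun _ => rfl⟩
  obtain ⟨gψ2, hgψ2d⟩ : ∃ F : ℝ → ℝ, ∀ a, F a = (Bx ψ s₀ a y).2 := ⟨_, fun _ => rfl⟩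
  obtain ⟨gχ1, hgχ1d⟩ : ∃ F : ℝ → ℝ, ∀ a, F a = (Bx χ s₀ a y).1 := ⟨_, fun _ => rfl⟩
  obtain ⟨gχ2, hgχ2d⟩ : ∃ F : ℝ → ℝ, ∀ a, F a = (Bx χ s₀ a y).2 := ⟨_, fun _ => rfl⟩
  have hgψ1e : gψ1 = fun a =>
      -(1/4) * deriv f₂ a * Aψ 0 a + deriv (Aψ 0) a + (1/2) * deriv f₁ a * Aψ 1 a := by
    funext a
    rw [hgψ1d, hBx]
    simp only [hCψ, hsf₁, hsf₂]
  have hgψ2e : gψ2 = fun a => (1/2) * deriv f₂ a * Aψ 1 a - 2 * deriv (Aψ 1) a := by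
    funext a
    rw [hgψ2d, hBx]
    simp only [hCψ, hsf₂]
  have hgχ1e : gχ1 = fun a =>
      -(1/4) * deriv f₂ a * Aχ 0 a + deriv (Aχ 0) a + (1/2) * deriv f₁ a * Aχ 1 a := by
    funext a
    rw [hgχ1d, hBx]
    simp only [hCχ, hsf₁, hsf₂]
  have hgχ2e : gχ2 = fun a => (1/2) * deriv f₂ a * Aχ 1 a - 2 * deriv (Aχ 1) a := by
    funext a
    rw [hgχ2d, hBx]
    simp only [hCχ, hsf₂]
  have hgψ1cd : ContDiff ℝ ∞' gψ1 := by
    rw [hgψ1e]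
    exact (((contDiff_const.mul (cd_deriv hf₂cd)).mul (hAψcd 0)).add
      (cd_deriv (hAψcd 0))).add ((contDiff_const.mul (cd_deriv hf₁cd)).mul (hAψcd 1))
  have hgψ2cd : ContDiff ℝ ∞' gψ2 := by
    rw [hgψ2e]
    exact ((contDiff_const.mul (cd_deriv hf₂cd)).mul (hAψcd 1)).sub
      (contDiff_const.mul (cd_deriv (hAψcd 1)))
  have hgχ1cd : ContDiff ℝ ∞' gχ1 := by
    rw [hgχ1e]
    exact (((contDiff_const.mul (cd_deriv hf₂cd)).mul (hAχcd 0)).add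
      (cd_deriv (hAχcd 0))).add ((contDiff_const.mul (cd_deriv hf₁cd)).mul (hAχcd 1))
  have hgχ2cd : ContDiff ℝ ∞' gχ2 := by
    rw [hgχ2e]
    exact ((contDiff_const.mul (cd_deriv hf₂cd)).mul (hAχcd 1)).sub
      (contDiff_const.mul (cd_deriv (hAχcd 1)))
  -- values of C on the deformed sections
  have hCpsit : ∀ (i : Fin 2) (t z : ℝ),
      C χ i (fun a b => s₀.1 a b + t * (Bx ψ s₀ a b).1,
             fun a b => s₀.2 a b + t * (Bx ψ s₀ a b).2) z y
        = χ i z (Jets N (Pv (fun r => f₂ r + t * gψ2 r)) z)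
            (Jets N (Qv (fun r => f₁ r + t * gψ1 r) (fun r => f₂ r + t * gψ2 r)) z) := by
    intro i t z
    refine hCval χ _ _ _ ?_ ?_ i z
    · funext a
      show s₀.1 a y + t * (Bx ψ s₀ a y).1 = _
      rw [hf₁d a, hgψ1d a]
    · funext a
      show s₀.2 a y + t * (Bx ψ s₀ a y).2 = _
      rw [hf₂d a, hgψ2d a]
  have hCchit : ∀ (i : Fin 2) (t z : ℝ),
      C ψ i (fun a b => s₀.1 a b + t * (Bx χ s₀ a b).1,
             fun a b => s₀.2 a b + t * (Bx χ s₀ a b).2) z y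
        = ψ i z (Jets N (Pv (fun r => f₂ r + t * gχ2 r)) z)
            (Jets N (Qv (fun r => f₁ r + t * gχ1 r) (fun r => f₂ r + t * gχ2 r)) z) := by
    intro i t z
    refine hCval ψ _ _ _ ?_ ?_ i z
    · funext a
      show s₀.1 a y + t * (Bx χ s₀ a y).1 = _
      rw [hf₁d a, hgχ1d a]
    · funext a
      show s₀.2 a y + t * (Bx χ s₀ a y).2 = _
      rw [hf₂d a, hgχ2d a]
  -- jointly smooth families
  obtain ⟨G0, hG0cd, hG0e⟩ := master ((hχ 0).of_le (by simp)) hf₁cd hf₂cd hgψ1cd hgψ2cd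
  obtain ⟨G1, hG1cd, hG1e⟩ := master ((hχ 1).of_le (by simp)) hf₁cd hf₂cd hgψ1cd hgψ2cd
  obtain ⟨H0, hH0cd, hH0e⟩ := master ((hψ 0).of_le (by simp)) hf₁cd hf₂cd hgχ1cd hgχ2cd
  obtain ⟨H1, hH1cd, hH1e⟩ := master ((hψ 1).of_le (by simp)) hf₁cd hf₂cd hgχ1cd hgχ2cd
  have hCG0 : ∀ t z : ℝ,
      C χ 0 (fun a b => s₀.1 a b + t * (Bx ψ s₀ a b).1,
             fun a b => s₀.2 a b + t * (Bx ψ s₀ a b).2) z y = G0 (t, z) :=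
    fun t z => (hCpsit 0 t z).trans (hG0e t z).symm
  have hCG1 : ∀ t z : ℝ,
      C χ 1 (fun a b => s₀.1 a b + t * (Bx ψ s₀ a b).1,
             fun a b => s₀.2 a b + t * (Bx ψ s₀ a b).2) z y = G1 (t, z) :=
    fun t z => (hCpsit 1 t z).trans (hG1e t z).symm
  have hCH0 : ∀ t z : ℝ,
      C ψ 0 (fun a b => s₀.1 a b + t * (Bx χ s₀ a b).1,
             fun a b => s₀.2 a b + t * (Bx χ s₀ a b).2) z y = H0 (t, z) :=
    fun t z => (hCchit 0 t z).trans (hH0e t z).symm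
  have hCH1 : ∀ t z : ℝ,
      C ψ 1 (fun a b => s₀.1 a b + t * (Bx χ s₀ a b).1,
             fun a b => s₀.2 a b + t * (Bx χ s₀ a b).2) z y = H1 (t, z) :=
    fun t z => (hCchit 1 t z).trans (hH1e t z).symm
  -- values at t = 0
  have ez1ψ : (fun r => f₁ r + (0:ℝ) * gψ1 r) = f₁ := by funext r; simp
  have ez2ψ : (fun r => f₂ r + (0:ℝ) * gψ2 r) = f₂ := by funext r; simp
  have ez1χ : (fun r => f₁ r + (0:ℝ) * gχ1 r) = f₁ := by funext r; simp
  have ez2χ : (fun r => f₂ r + (0:ℝ) * gχ2 r) = f₂ := by funext r; simp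
  have hG00 : ∀ z, G0 (0, z) = Aχ 0 z := by
    intro z
    rw [hG0e 0 z, ez1ψ, ez2ψ, hAχd]
  have hG10 : ∀ z, G1 (0, z) = Aχ 1 z := by
    intro z
    rw [hG1e 0 z, ez1ψ, ez2ψ, hAχd]
  have hH00 : ∀ z, H0 (0, z) = Aψ 0 z := by
    intro z
    rw [hH0e 0 z, ez1χ, ez2χ, hAψd]
  have hH10 : ∀ z, H1 (0, z) = Aψ 1 z := by
    intro z
    rw [hH1e 0 z, ez1χ, ez2χ, hAψd]
  -- the linearized values
  obtain ⟨E0, hE0d⟩ : ∃ F : ℝ → ℝ, ∀ z, F z = deriv (fun t => G0 (t, z)) 0 := ⟨_, fun _ => rfl⟩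
  obtain ⟨E1, hE1d⟩ : ∃ F : ℝ → ℝ, ∀ z, F z = deriv (fun t => G1 (t, z)) 0 := ⟨_, fun _ => rfl⟩
  obtain ⟨F0, hF0d⟩ : ∃ F : ℝ → ℝ, ∀ z, F z = deriv (fun t => H0 (t, z)) 0 := ⟨_, fun _ => rfl⟩
  obtain ⟨F1, hF1d⟩ : ∃ F : ℝ → ℝ, ∀ z, F z = deriv (fun t => H1 (t, z)) 0 := ⟨_, fun _ => rfl⟩
  have hE0cd : ContDiff ℝ ∞' E0 := by
    rw [show E0 = fun z => deriv (fun t => G0 (t, z)) 0 from funext hE0d]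
    exact cd_partial1_at0 hG0cd
  have hE1cd : ContDiff ℝ ∞' E1 := by
    rw [show E1 = fun z => deriv (fun t => G1 (t, z)) 0 from funext hE1d]
    exact cd_partial1_at0 hG1cd
  have hF0cd : ContDiff ℝ ∞' F0 := by
    rw [show F0 = fun z => deriv (fun t => H0 (t, z)) 0 from funext hF0d]
    exact cd_partial1_at0 hH0cd
  have hF1cd : ContDiff ℝ ∞' F1 := by
    rw [show F1 = fun z => deriv (fun t => H1 (t, z)) 0 from funext hF1d]
    exact cd_partial1_at0 hH1cd
  have hEvE0 : ∀ z, Ev (Bx ψ) (C χ 0) s₀ z y = E0 z := by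
    intro z; rw [hEv]; simp only [hCG0]; exact (hE0d z).symm
  have hEvE1 : ∀ z, Ev (Bx ψ) (C χ 1) s₀ z y = E1 z := by
    intro z; rw [hEv]; simp only [hCG1]; exact (hE1d z).symm
  have hEvF0 : ∀ z, Ev (Bx χ) (C ψ 0) s₀ z y = F0 z := by
    intro z; rw [hEv]; simp only [hCH0]; exact (hF0d z).symm
  have hEvF1 : ∀ z, Ev (Bx χ) (C ψ 1) s₀ z y = F1 z := by
    intro z; rw [hEv]; simp only [hCH1]; exact (hF1d z).symm
  -- t-derivatives of the joint families
  have hG0has : ∀ z, HasDerivAt (fun t => G0 (t, z)) (E0 z) 0 := by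
    intro z
    have h := (diff_slice1 hG0cd 0 z).hasDerivAt
    rwa [← hE0d z] at h
  have hG1has : ∀ z, HasDerivAt (fun t => G1 (t, z)) (E1 z) 0 := by
    intro z
    have h := (diff_slice1 hG1cd 0 z).hasDerivAt
    rwa [← hE1d z] at h
  have hH0has : ∀ z, HasDerivAt (fun t => H0 (t, z)) (F0 z) 0 := by
    intro z
    have h := (diff_slice1 hH0cd 0 z).hasDerivAt
    rwa [← hF0d z] at h
  have hH1has : ∀ z, HasDerivAt (fun t => H1 (t, z)) (F1 z) 0 := by
    intro z
    have h := (diff_slice1 hH1cd 0 z).hasDerivAt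
    rwa [← hF1d z] at h
  -- mixed partials
  have hDG0 : HasDerivAt (fun t => deriv (fun r' => G0 (t, r')) x) (deriv E0 x) 0 := by
    have e : (fun t => deriv (fun r' => G0 (t, r')) x)
        = fun t => fderiv ℝ G0 (t, x) (0, 1) :=
      funext fun t => deriv_slice2 ((hG0cd.differentiable le_inf) (t, x))
    have hdiff : DifferentiableAt ℝ (fun t => deriv (fun r' => G0 (t, r')) x) 0 := by
      rw [e]; exact diff_slice1 (cd_pd hG0cd (0, 1)) 0 x
    have h := hdiff.hasDerivAt
    rw [S19X.mixed hG0cd 0 x] at h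
    rwa [show (fun r => deriv (fun t => G0 (t, r)) 0) = E0 from (funext hE0d).symm] at h
  have hDG1 : HasDerivAt (fun t => deriv (fun r' => G1 (t, r')) x) (deriv E1 x) 0 := by
    have e : (fun t => deriv (fun r' => G1 (t, r')) x)
        = fun t => fderiv ℝ G1 (t, x) (0, 1) :=
      funext fun t => deriv_slice2 ((hG1cd.differentiable le_inf) (t, x))
    have hdiff : DifferentiableAt ℝ (fun t => deriv (fun r' => G1 (t, r')) x) 0 := by
      rw [e]; exact diff_slice1 (cd_pd hG1cd (0, 1)) 0 x
    have h := hdiff.hasDerivAt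
    rw [S19X.mixed hG1cd 0 x] at h
    rwa [show (fun r => deriv (fun t => G1 (t, r)) 0) = E1 from (funext hE1d).symm] at h
  have hDH0 : HasDerivAt (fun t => deriv (fun r' => H0 (t, r')) x) (deriv F0 x) 0 := by
    have e : (fun t => deriv (fun r' => H0 (t, r')) x)
        = fun t => fderiv ℝ H0 (t, x) (0, 1) :=
      funext fun t => deriv_slice2 ((hH0cd.differentiable le_inf) (t, x))
    have hdiff : DifferentiableAt ℝ (fun t => deriv (fun r' => H0 (t, r')) x) 0 := by
      rw [e]; exact diff_slice1 (cd_pd hH0cd (0, 1)) 0 x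
    have h := hdiff.hasDerivAt
    rw [S19X.mixed hH0cd 0 x] at h
    rwa [show (fun r => deriv (fun t => H0 (t, r)) 0) = F0 from (funext hF0d).symm] at h
  have hDH1 : HasDerivAt (fun t => deriv (fun r' => H1 (t, r')) x) (deriv F1 x) 0 := by
    have e : (fun t => deriv (fun r' => H1 (t, r')) x)
        = fun t => fderiv ℝ H1 (t, x) (0, 1) :=
      funext fun t => deriv_slice2 ((hH1cd.differentiable le_inf) (t, x))
    have hdiff : DifferentiableAt ℝ (fun t => deriv (fun r' => H1 (t, r')) x) 0 := by
      rw [e]; exact diff_slice1 (cd_pd hH1cd (0, 1)) 0 x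
    have h := hdiff.hasDerivAt
    rw [S19X.mixed hH1cd 0 x] at h
    rwa [show (fun r => deriv (fun t => H1 (t, r)) 0) = F1 from (funext hF1d).symm] at h
  -- affine factor derivative
  have haff : ∀ c d : ℝ, HasDerivAt (fun t : ℝ => c + t * d) d 0 := by
    intro c d
    simpa using ((hasDerivAt_id (0:ℝ)).mul_const d).const_add c
  -- slice equalities for the deformed sections
  have hsl1ψ : ∀ t : ℝ, (fun a => s₀.1 a y + t * (Bx ψ s₀ a y).1)
      = fun r => f₁ r + t * gψ1 r := by
    intro t; funext a; rw [hf₁d a, hgψ1d a]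
  have hsl2ψ : ∀ t : ℝ, (fun a => s₀.2 a y + t * (Bx ψ s₀ a y).2)
      = fun r => f₂ r + t * gψ2 r := by
    intro t; funext a; rw [hf₂d a, hgψ2d a]
  have hsl1χ : ∀ t : ℝ, (fun a => s₀.1 a y + t * (Bx χ s₀ a y).1)
      = fun r => f₁ r + t * gχ1 r := by
    intro t; funext a; rw [hf₁d a, hgχ1d a]
  have hsl2χ : ∀ t : ℝ, (fun a => s₀.2 a y + t * (Bx χ s₀ a y).2)
      = fun r => f₂ r + t * gχ2 r := by
    intro t; funext a; rw [hf₂d a, hgχ2d a]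
  -- the four Ev-of-□ computations
  have hEvB1ψ : Ev (Bx ψ) (fun s a b => (Bx χ s a b).1) s₀ x y
      = -(1/4) * (deriv gψ2 x * Aχ 0 x + deriv f₂ x * E0 x) + deriv E0 x
        + (1/2) * (deriv gψ1 x * Aχ 1 x + deriv f₁ x * E1 x) := by
    rw [hEv]
    simp only [hBx χ, hCG0, hCG1, hsl1ψ, hsl2ψ, deriv_affine hf₁cd hgψ1cd,
      deriv_affine hf₂cd hgψ2cd]
    have HT := ((((haff (deriv f₂ x) (deriv gψ2 x)).const_mul (-(1/4))).mul
      (hG0has x)).add hDG0).add (((haff (deriv f₁ x) (deriv gψ1 x)).const_mul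
      (1/2)).mul (hG1has x))
    refine HT.deriv.trans ?_
    simp only [hG00, hG10]
    ring
  have hEvB2ψ : Ev (Bx ψ) (fun s a b => (Bx χ s a b).2) s₀ x y
      = (1/2) * (deriv gψ2 x * Aχ 1 x + deriv f₂ x * E1 x) - 2 * deriv E1 x := by
    rw [hEv]
    simp only [hBx χ, hCG1, hsl2ψ, deriv_affine hf₂cd hgψ2cd]
    have HT := ((((haff (deriv f₂ x) (deriv gψ2 x)).const_mul (1/2)).mul
      (hG1has x))).sub (hDG1.const_mul 2)
    refine HT.deriv.trans ?_
    simp only [hG10]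
    ring
  have hEvB1χ : Ev (Bx χ) (fun s a b => (Bx ψ s a b).1) s₀ x y
      = -(1/4) * (deriv gχ2 x * Aψ 0 x + deriv f₂ x * F0 x) + deriv F0 x
        + (1/2) * (deriv gχ1 x * Aψ 1 x + deriv f₁ x * F1 x) := by
    rw [hEv]
    simp only [hBx ψ, hCH0, hCH1, hsl1χ, hsl2χ, deriv_affine hf₁cd hgχ1cd,
      deriv_affine hf₂cd hgχ2cd]
    have HT := ((((haff (deriv f₂ x) (deriv gχ2 x)).const_mul (-(1/4))).mul
      (hH0has x)).add hDH0).add (((haff (deriv f₁ x) (deriv gχ1 x)).const_mul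
      (1/2)).mul (hH1has x))
    refine HT.deriv.trans ?_
    simp only [hH00, hH10]
    ring
  have hEvB2χ : Ev (Bx χ) (fun s a b => (Bx ψ s a b).2) s₀ x y
      = (1/2) * (deriv gχ2 x * Aψ 1 x + deriv f₂ x * F1 x) - 2 * deriv F1 x := by
    rw [hEv]
    simp only [hBx ψ, hCH1, hsl2χ, deriv_affine hf₂cd hgχ2cd]
    have HT := ((((haff (deriv f₂ x) (deriv gχ2 x)).const_mul (1/2)).mul
      (hH1has x))).sub (hDH1.const_mul 2)
    refine HT.deriv.trans ?_
    simp only [hH10]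
    ring
  -- pointwise HasDerivAt atoms at x
  have hf1'has : HasDerivAt (deriv f₁) (deriv (deriv f₁) x) x :=
    (((cd_deriv hf₁cd).differentiable le_inf) x).hasDerivAt
  have hf2'has : HasDerivAt (deriv f₂) (deriv (deriv f₂) x) x :=
    (((cd_deriv hf₂cd).differentiable le_inf) x).hasDerivAt
  have hAψ0has : HasDerivAt (Aψ 0) (deriv (Aψ 0) x) x :=
    (((hAψcd 0).differentiable le_inf) x).hasDerivAt
  have hAψ1has : HasDerivAt (Aψ 1) (deriv (Aψ 1) x) x :=
    (((hAψcd 1).differentiable le_inf) x).hasDerivAt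
  have hAχ0has : HasDerivAt (Aχ 0) (deriv (Aχ 0) x) x :=
    (((hAχcd 0).differentiable le_inf) x).hasDerivAt
  have hAχ1has : HasDerivAt (Aχ 1) (deriv (Aχ 1) x) x :=
    (((hAχcd 1).differentiable le_inf) x).hasDerivAt
  have hAψ0'has : HasDerivAt (deriv (Aψ 0)) (deriv (deriv (Aψ 0)) x) x :=
    (((cd_deriv (hAψcd 0)).differentiable le_inf) x).hasDerivAt
  have hAψ1'has : HasDerivAt (deriv (Aψ 1)) (deriv (deriv (Aψ 1)) x) x :=
    (((cd_deriv (hAψcd 1)).differentiable le_inf) x).hasDerivAt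
  have hAχ0'has : HasDerivAt (deriv (Aχ 0)) (deriv (deriv (Aχ 0)) x) x :=
    (((cd_deriv (hAχcd 0)).differentiable le_inf) x).hasDerivAt
  have hAχ1'has : HasDerivAt (deriv (Aχ 1)) (deriv (deriv (Aχ 1)) x) x :=
    (((cd_deriv (hAχcd 1)).differentiable le_inf) x).hasDerivAt
  have hE0has : HasDerivAt E0 (deriv E0 x) x := ((hE0cd.differentiable le_inf) x).hasDerivAt
  have hE1has : HasDerivAt E1 (deriv E1 x) x := ((hE1cd.differentiable le_inf) x).hasDerivAt
  have hF0has : HasDerivAt F0 (deriv F0 x) x := ((hF0cd.differentiable le_inf) x).hasDerivAt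
  have hF1has : HasDerivAt F1 (deriv F1 x) x := ((hF1cd.differentiable le_inf) x).hasDerivAt
  -- derivatives of the perturbations at x
  have hdgψ1 : deriv gψ1 x
      = -(1/4) * (deriv (deriv f₂) x * Aψ 0 x + deriv f₂ x * deriv (Aψ 0) x)
        + deriv (deriv (Aψ 0)) x
        + (1/2) * (deriv (deriv f₁) x * Aψ 1 x + deriv f₁ x * deriv (Aψ 1) x) := by
    rw [hgψ1e]
    have HT := (((hf2'has.const_mul (-(1/4))).mul hAψ0has).add hAψ0'has).add
      ((hf1'has.const_mul (1/2)).mul hAψ1has)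
    refine HT.deriv.trans ?_
    beta_reduce
    ring
  have hdgψ2 : deriv gψ2 x
      = (1/2) * (deriv (deriv f₂) x * Aψ 1 x + deriv f₂ x * deriv (Aψ 1) x)
        - 2 * deriv (deriv (Aψ 1)) x := by
    rw [hgψ2e]
    have HT := ((hf2'has.const_mul (1/2)).mul hAψ1has).sub (hAψ1'has.const_mul 2)
    refine HT.deriv.trans ?_
    beta_reduce
    ring
  have hdgχ1 : deriv gχ1 x
      = -(1/4) * (deriv (deriv f₂) x * Aχ 0 x + deriv f₂ x * deriv (Aχ 0) x)
        + deriv (deriv (Aχ 0)) x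
        + (1/2) * (deriv (deriv f₁) x * Aχ 1 x + deriv f₁ x * deriv (Aχ 1) x) := by
    rw [hgχ1e]
    have HT := (((hf2'has.const_mul (-(1/4))).mul hAχ0has).add hAχ0'has).add
      ((hf1'has.const_mul (1/2)).mul hAχ1has)
    refine HT.deriv.trans ?_
    beta_reduce
    ring
  have hdgχ2 : deriv gχ2 x
      = (1/2) * (deriv (deriv f₂) x * Aχ 1 x + deriv f₂ x * deriv (Aχ 1) x)
        - 2 * deriv (deriv (Aχ 1)) x := by
    rw [hgχ2e]
    have HT := ((hf2'has.const_mul (1/2)).mul hAχ1has).sub (hAχ1'has.const_mul 2)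
    refine HT.deriv.trans ?_
    beta_reduce
    ring
  -- derivatives of the bracket arguments at x
  have hArg1 : deriv (fun r' => E0 r' - F0 r'
      + 1/2 * (deriv (Aψ 1) r' * Aχ 0 r' - Aψ 0 r' * deriv (Aχ 1) r'
        + deriv (Aψ 0) r' * Aχ 1 r' - Aψ 1 r' * deriv (Aχ 0) r')) x
      = deriv E0 x - deriv F0 x
      + 1/2 * ((deriv (deriv (Aψ 1)) x * Aχ 0 x + deriv (Aψ 1) x * deriv (Aχ 0) x)
        - (deriv (Aψ 0) x * deriv (Aχ 1) x + Aψ 0 x * deriv (deriv (Aχ 1)) x)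
        + (deriv (deriv (Aψ 0)) x * Aχ 1 x + deriv (Aψ 0) x * deriv (Aχ 1) x)
        - (deriv (Aψ 1) x * deriv (Aχ 0) x + Aψ 1 x * deriv (deriv (Aχ 0)) x)) := by
    have HT := (hE0has.sub hF0has).add
      (((((hAψ1'has.mul hAχ0has).sub (hAψ0has.mul hAχ1'has)).add
        (hAψ0'has.mul hAχ1has)).sub (hAψ1has.mul hAχ0'has)).const_mul (1/2))
    refine HT.deriv.trans ?_
    beta_reduce
    ring
  have hArg2 : deriv (fun r' => E1 r' - F1 r'
      + 1/2 * (deriv (Aψ 1) r' * Aχ 1 r' - Aψ 1 r' * deriv (Aχ 1) r')) x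
      = deriv E1 x - deriv F1 x
      + 1/2 * ((deriv (deriv (Aψ 1)) x * Aχ 1 x + deriv (Aψ 1) x * deriv (Aχ 1) x)
        - (deriv (Aψ 1) x * deriv (Aχ 1) x + Aψ 1 x * deriv (deriv (Aχ 1)) x)) := by
    have HT := (hE1has.sub hF1has).add
      (((hAψ1'has.mul hAχ1has).sub (hAψ1has.mul hAχ1'has)).const_mul (1/2))
    refine HT.deriv.trans ?_
    beta_reduce
    ring
  -- final assembly
  rw [Prod.mk.injEq]
  constructor
  · rw [hEvB1ψ, hEvB1χ]
    simp only [hEvE0, hEvE1, hEvF0, hEvF1, hCψ, hCχ, hsf₁, hsf₂]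
    rw [hArg1]
    rw [hdgψ1, hdgψ2, hdgχ1, hdgχ2]
    ring
  · rw [hEvB2ψ, hEvB2χ]
    simp only [hEvE0, hEvE1, hEvF0, hEvF1, hCψ, hCχ, hsf₁, hsf₂]
    rw [hArg2]
    rw [hdgψ2, hdgχ2]
    ring
end
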